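/- arXiv:1401.3713 — 10 statements merged into one kernel-verified Lean document; each statement's English description precedes it below -/
import Mathlib

section
/- Let q be a prime power, and let α be an element of the algebraic closure of F_q. Suppose Tr_{F_{q^m}/F_q}(α) = 0 and Tr_{F_{q^n}/F_q}(α) = 0, where Tr denotes the trace polynomial x + x^q + ... + x^{q^{k-1}} evaluated at α. If gcd(m,n) = 1, then α = 0. -/
/-!
Write `T k = ∑_{i<k} σ^i α` for the `q`-power Frobenius `σ`. Since `σ` is additive,
`T (a + b) = T a + σ^a (T b)`, and `σ` is injective, so the set of `k` with `T k = 0` is closed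
under addition and under `(a + b, a) ↦ b`. Like a set of periods, it is then closed under the
Euclidean algorithm and contains `gcd m n = 1`; but `T 1 = α`.
-/

open Finset

namespace AddMonoid.End

variable {M : Type*} [AddCommMonoid M] (f : AddMonoid.End M)

def partialTrace (k : ℕ) (x : M) : M :=
  ∑ i ∈ range k, (f ^ i) x

variable {f}

@[simp]
theorem partialTrace_zero (x : M) : partialTrace f 0 x = 0 :=
  sum_range_zero _

@[simp]
theorem partialTrace_one (x : M) : partialTrace f 1 x = x := by
  simp [partialTrace]

theorem partialTrace_add (a b : ℕ) (x : M) :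
    partialTrace f (a + b) x = partialTrace f a x + (f ^ a) (partialTrace f b x) := by
  simp only [partialTrace, sum_range_add, map_sum, pow_add, coe_mul, Function.comp_apply]

theorem partialTrace_mul_eq_zero {k : ℕ} {x : M} (hk : partialTrace f k x = 0) (c : ℕ) :
    partialTrace f (c * k) x = 0 := by
  induction c with
  | zero => simp
  | succ c ih => rw [add_one_mul, partialTrace_add, ih, hk, map_zero, add_zero]

theorem partialTrace_eq_zero_of_add (hf : Function.Injective f) {a b : ℕ} {x : M}
    (hab : partialTrace f (a + b) x = 0) (ha : partialTrace f a x = 0) :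
    partialTrace f b x = 0 := by
  rw [partialTrace_add, ha, zero_add] at hab
  have hfa : Function.Injective (f ^ a) := by rw [coe_pow]; exact hf.iterate a
  exact hfa (hab.trans (map_zero _).symm)

theorem partialTrace_mod_eq_zero (hf : Function.Injective f) {m n : ℕ} {x : M}
    (hm : partialTrace f m x = 0) (hn : partialTrace f n x = 0) :
    partialTrace f (n % m) x = 0 := by
  rw [← Nat.div_add_mod n m, mul_comm] at hn
  exact partialTrace_eq_zero_of_add hf hn (partialTrace_mul_eq_zero hm _)

theorem partialTrace_gcd_eq_zero (hf : Function.Injective f) {m n : ℕ} {x : M}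
    (hm : partialTrace f m x = 0) (hn : partialTrace f n x = 0) :
    partialTrace f (m.gcd n) x = 0 := by
  revert hm hn
  refine Nat.gcd.induction m n (fun n _ hn => ?_) fun m n _ ih hm hn => ?_
  · rwa [Nat.gcd_zero_left]
  · rw [Nat.gcd_rec]
    exact ih (partialTrace_mod_eq_zero hf hm hn) hm

theorem eq_zero_of_partialTrace_eq_zero_of_coprime (hf : Function.Injective f) {m n : ℕ}
    (hmn : m.Coprime n) {x : M} (hm : partialTrace f m x = 0) (hn : partialTrace f n x = 0) :
    x = 0 := by
  simpa [hmn.gcd_eq_one] using partialTrace_gcd_eq_zero hf hm hn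

theorem pow_apply_of_forall_apply_eq_pow {R : Type*} [Semiring R]
    {σ : AddMonoid.End R} {q : ℕ} (hσ : ∀ x, σ x = x ^ q) (i : ℕ) (x : R) :
    (σ ^ i) x = x ^ q ^ i := by
  induction i with
  | zero => simp
  | succ i ih =>
    rw [pow_succ', coe_mul, Function.comp_apply, ih, hσ, ← pow_mul, ← pow_succ]

end AddMonoid.End

theorem stmt_0_general (p e : ℕ) [Fact p.Prime] (q : ℕ) (hq : q = p ^ e)
    (m n : ℕ) (hcop : Nat.gcd m n = 1)
    (α : AlgebraicClosure (GaloisField p e))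
    (h1 : ∑ i ∈ Finset.range m, α ^ q ^ i = 0)
    (h2 : ∑ i ∈ Finset.range n, α ^ q ^ i = 0) :
    α = 0 := by
  subst hq
  let σ : AddMonoid.End (AlgebraicClosure (GaloisField p e)) :=
    (iterateFrobenius (AlgebraicClosure (GaloisField p e)) p e).toAddMonoidHom
  have hσ : ∀ k, σ.partialTrace k α = ∑ i ∈ range k, α ^ (p ^ e) ^ i := fun k =>
    sum_congr rfl fun i _ =>
      AddMonoid.End.pow_apply_of_forall_apply_eq_pow (fun _ => rfl) i α
  exact AddMonoid.End.eq_zero_of_partialTrace_eq_zero_of_coprime (RingHom.injective _) hcop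
    ((hσ m).trans h1) ((hσ n).trans h2)

/-- If `α` in an algebraic closure of `𝔽_q` (q = p^e) satisfies
`Tr_m(α) = α + α^q + ⋯ + α^{q^{m-1}} = 0` and `Tr_n(α) = 0` with `gcd(m,n) = 1`,
then `α = 0`. -/
theorem stmt_0 (p e : ℕ) [Fact p.Prime] (he : 0 < e) (q : ℕ) (hq : q = p ^ e)
    (m n : ℕ) (hm : 0 < m) (hn : 0 < n) (hcop : Nat.gcd m n = 1)
    (α : AlgebraicClosure (GaloisField p e))
    (h1 : ∑ i ∈ Finset.range m, α ^ q ^ i = 0)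
    (h2 : ∑ i ∈ Finset.range n, α ^ q ^ i = 0) :
    α = 0 :=
  stmt_0_general p e q hq m n hcop α h1 h2
end

section
/- Let n and m be non-negative integers with n ≥ m, and let T_k(x) = x + x^q + ... + x^{q^{k-1}} denote the trace polynomial over F_q. Define S_{m,n}(x,y) = 0 if m = 0, and S_{m,n}(x,y) = Σ_{i=0}^{m-1} y^{q^{n-1-i}} T_{m-i}(x) if m > 0. Then in F_q[x,y], S^q − S = y^{q^n} T_{m+1}(x) − x T_{m+1}(y^{q^{n-m}}). -/
/-! Since `a ↦ a ^ q` is additive, it maps `T_k(a)` to `T_{k+1}(a) - a`. Splitting off the `i = 0`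
term of `S_{m+1,n}` leaves `S_{m,n-1}`, so the identity follows by induction on `m`, the new term
`y^{q^{n-1}} T_{m+1}(x)` contributing exactly the difference between the right-hand sides. -/

/-- The "trace polynomial" operator: `T_k(a) = a + a^q + ⋯ + a^{q^{k-1}}`. -/
def traceImg (q k : ℕ) {R : Type*} [CommRing R] (a : R) : R :=
  ∑ j ∈ Finset.range k, a ^ q ^ j

/-- `S_{m,n}(x,y)`: `0` if `m = 0`, and `∑_{i=0}^{m-1} y^{q^{n-1-i}} T_{m-i}(x)` otherwise. -/
def SPoly (q m n : ℕ) {R : Type*} [CommRing R] (x y : R) : R :=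
  if m = 0 then 0 else ∑ i ∈ Finset.range m, y ^ q ^ (n - 1 - i) * traceImg q (m - i) x

section

variable {R : Type*} [CommRing R]

lemma traceImg_succ (q k : ℕ) (a : R) :
    traceImg q (k + 1) a = traceImg q k a + a ^ q ^ k :=
  Finset.sum_range_succ _ _

lemma traceImg_pow_expChar_pow (p e k : ℕ) [ExpChar R p] (a : R) :
    traceImg (p ^ e) k a ^ p ^ e = traceImg (p ^ e) (k + 1) a - a := by
  have hterm (j : ℕ) : iterateFrobenius R p e (a ^ (p ^ e) ^ j) = a ^ (p ^ e) ^ (j + 1) := by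
    rw [iterateFrobenius_def, ← pow_mul, ← pow_succ]
  rw [← iterateFrobenius_def, traceImg, map_sum, traceImg, Finset.sum_range_succ']
  simp only [hterm, pow_zero, pow_one, add_sub_cancel_right]

lemma SPoly_succ (q m n : ℕ) (x y : R) :
    SPoly q (m + 1) n x y = y ^ q ^ (n - 1) * traceImg q (m + 1) x + SPoly q m (n - 1) x y := by
  rw [SPoly, if_neg m.succ_ne_zero, Finset.sum_range_succ', add_comm]
  rcases Nat.eq_zero_or_pos m with rfl | hm
  · simp [SPoly]
  · rw [SPoly, if_neg hm.ne']
    congr 1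
    refine Finset.sum_congr rfl fun i _ ↦ ?_
    rw [show n - 1 - (i + 1) = n - 1 - 1 - i by omega, show m + 1 - (i + 1) = m - i by omega]

theorem SPoly_pow_sub_self (p e : ℕ) [ExpChar R p] {m n : ℕ} (hmn : m ≤ n) (x y : R) :
    SPoly (p ^ e) m n x y ^ p ^ e - SPoly (p ^ e) m n x y
      = y ^ (p ^ e) ^ n * traceImg (p ^ e) (m + 1) x
          - x * traceImg (p ^ e) (m + 1) (y ^ (p ^ e) ^ (n - m)) := by
  induction m generalizing n with
  | zero =>
    simp [SPoly, traceImg, zero_pow (expChar_pow_pos R p e).ne', ← pow_mul, mul_comm]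
  | succ m ih =>
    have hn : 1 ≤ n := by omega
    have hprev := ih (n := n - 1) (by omega)
    rw [show n - 1 - m = n - (m + 1) by omega] at hprev
    have hlast : (y ^ (p ^ e) ^ (n - (m + 1))) ^ (p ^ e) ^ (m + 1) = y ^ (p ^ e) ^ n := by
      rw [← pow_mul, ← pow_add, Nat.sub_add_cancel hmn]
    rw [SPoly_succ, add_pow_expChar_pow, mul_pow, ← pow_mul, ← pow_succ, Nat.sub_add_cancel hn,
      traceImg_pow_expChar_pow, traceImg_succ _ (m + 1) (y ^ _), hlast]
    linear_combination hprev

end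

theorem stmt_1_general (p e : ℕ) [Fact p.Prime] (q : ℕ) (hq : q = p ^ e)
    (m n : ℕ) (hmn : m ≤ n) :
    (SPoly q m n (MvPolynomial.X 0) (MvPolynomial.X 1) : MvPolynomial (Fin 2) (GaloisField p e)) ^ q
        - SPoly q m n (MvPolynomial.X 0) (MvPolynomial.X 1)
      = (MvPolynomial.X 1 : MvPolynomial (Fin 2) (GaloisField p e)) ^ q ^ n
            * traceImg q (m + 1) (MvPolynomial.X 0)
          - MvPolynomial.X 0 * traceImg q (m + 1) ((MvPolynomial.X 1) ^ q ^ (n - m)) := by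
  subst hq
  exact SPoly_pow_sub_self p e hmn _ _

/-- in `𝔽_q[x,y]`,
`S^q − S = y^{q^n} T_{m+1}(x) − x T_{m+1}(y^{q^{n-m}})`. -/
theorem stmt_1 (p e : ℕ) [Fact p.Prime] (he : 0 < e) (q : ℕ) (hq : q = p ^ e)
    (m n : ℕ) (hmn : m ≤ n) :
    (SPoly q m n (MvPolynomial.X 0) (MvPolynomial.X 1) : MvPolynomial (Fin 2) (GaloisField p e)) ^ q
        - SPoly q m n (MvPolynomial.X 0) (MvPolynomial.X 1)
      = (MvPolynomial.X 1 : MvPolynomial (Fin 2) (GaloisField p e)) ^ q ^ n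
            * traceImg q (m + 1) (MvPolynomial.X 0)
          - MvPolynomial.X 0 * traceImg q (m + 1) ((MvPolynomial.X 1) ^ q ^ (n - m)) :=
  stmt_1_general p e q hq m n hmn
end

section
/- Let F be a nonconstant polynomial over F_{q^n} that is a minimal value set polynomial with value set V_F = F_q (i.e., #V_F = ⌊(q^n − 1)/deg F⌋ + 1 and {F(α) : α ∈ F_{q^n}} = F_q). Then for every γ ∈ F_q, a root β (in the algebraic closure) of F(x) − γ = 0 lies outside F_{q^n} if and only if its multiplicity is divisible by p. -/
/-!
Since `F` maps `𝔽_{q^n}` into `𝔽_q`, the polynomial `X^{q^n} - X` divides `F^q - F`.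
Minimality of the value set bounds `(q - 1) deg F < q^n`, so the cofactor has degree `< deg F`,
and differentiating (in characteristic `p`) identifies it with `F'`:
`F^q - F = (X^{q^n} - X) F'`. For `u = F - γ` we have `u^q - u = F^q - F`, whose multiplicity at
a root `β` of `u` is that of `u`. As `X^{q^n} - X` has simple roots exactly at the points of
`𝔽_{q^n}`, this gives `mult_β u = [β ∈ 𝔽_{q^n}] + mult_β u'`, and `mult_β u' ≥ mult_β u` holds
exactly when `p ∣ mult_β u` (otherwise `mult_β u' = mult_β u - 1`).
-/

open Polynomial

theorem pow_sub_self_eq_mul_pow_pred_sub_one {R : Type*} [Ring R] (a : R) {q : ℕ} (hq : q ≠ 0) :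
    a ^ q - a = a * (a ^ (q - 1) - 1) := by
  rw [mul_sub_one, mul_pow_sub_one hq]

namespace Polynomial

variable {R : Type*} [CommRing R]

theorem X_pow_sub_X_dvd_X_pow_pow_sub_X {q : ℕ} (hq : q ≠ 0) (n : ℕ) :
    (X ^ q - X : R[X]) ∣ X ^ q ^ n - X := by
  have hqn : q ^ n ≠ 0 := pow_ne_zero n hq
  rw [← mul_pow_sub_one hq, ← mul_pow_sub_one hqn, ← mul_sub_one, ← mul_sub_one]
  exact mul_dvd_mul_left X (dvd_pow_sub_one_of_dvd (Nat.sub_one_dvd_pow_sub_one q n))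

theorem pow_rootMultiplicity_dvd_derivative_of_cast_eq_zero {u : R[X]} {t : R}
    (h : (u.rootMultiplicity t : R) = 0) :
    (X - C t) ^ u.rootMultiplicity t ∣ derivative u := by
  obtain ⟨g, hg⟩ := u.pow_rootMultiplicity_dvd t
  refine ⟨derivative g, ?_⟩
  conv_lhs => rw [hg]
  rw [derivative_mul, derivative_X_sub_C_pow, h, C_0, zero_mul, zero_mul, zero_add]

section IsDomain

variable [IsDomain R]

theorem not_isRoot_pow_sub_one_of_isRoot {u : R[X]} {t : R} (ht : u.IsRoot t) {k : ℕ}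
    (hk : k ≠ 0) : ¬(u ^ k - 1).IsRoot t := by
  simp [ht.eq_zero, hk]

theorem pow_sub_self_ne_zero {u : R[X]} (hu : u ≠ 0) {t : R} (ht : u.IsRoot t) {q : ℕ}
    (hq : 1 < q) : u ^ q - u ≠ 0 := by
  rw [pow_sub_self_eq_mul_pow_pred_sub_one u (by omega)]
  exact mul_ne_zero hu fun h =>
    not_isRoot_pow_sub_one_of_isRoot ht (by omega : q - 1 ≠ 0) (by simp [h])

theorem rootMultiplicity_pow_sub_self {u : R[X]} {t : R} (ht : u.IsRoot t) {q : ℕ} (hq : 1 < q) :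
    (u ^ q - u).rootMultiplicity t = u.rootMultiplicity t := by
  rcases eq_or_ne u 0 with rfl | hu
  · rw [zero_pow (by omega), sub_zero]
  have hne := pow_sub_self_ne_zero hu ht hq
  rw [pow_sub_self_eq_mul_pow_pred_sub_one u (by omega)] at hne ⊢
  rw [rootMultiplicity_mul hne,
    rootMultiplicity_eq_zero (not_isRoot_pow_sub_one_of_isRoot ht (by omega)), add_zero]

end IsDomain

theorem dvd_rootMultiplicity_iff_le_rootMultiplicity_derivative {L : Type*} [Field L] {p : ℕ}
    [CharP L p] {u : L[X]} {t : L} (ht : u.IsRoot t) (hu' : derivative u ≠ 0) :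
    p ∣ u.rootMultiplicity t ↔ u.rootMultiplicity t ≤ (derivative u).rootMultiplicity t := by
  rw [← CharP.cast_eq_zero_iff L]
  refine ⟨fun h => (le_rootMultiplicity_iff hu').2
    (pow_rootMultiplicity_dvd_derivative_of_cast_eq_zero h), fun hle => ?_⟩
  by_contra h
  have hu : u ≠ 0 := fun hu => hu' (by rw [hu, derivative_zero])
  have hpos := (rootMultiplicity_pos hu).2 ht
  rw [derivative_rootMultiplicity_of_root_of_mem_nonZeroDivisors ht
    (mem_nonZeroDivisors_of_ne_zero h)] at hle
  omega

end Polynomial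

namespace FiniteField

variable {K : Type*} [Field K] [Fintype K]

theorem ncard_setOf_pow_eq_self {q n : ℕ} (hq : 1 < q) (hqK : (q : K) = 0)
    (hcard : Fintype.card K = q ^ n) : {y : K | y ^ q = y}.ncard = q := by
  classical
  have hP : (X ^ q - X : K[X]) ≠ 0 := X_pow_card_sub_X_ne_zero K hq
  have hsplits : (X ^ q - X : K[X]).Splits := by
    refine Splits.of_dvd ?_ (X_pow_card_sub_X_ne_zero K Fintype.one_lt_card)
      (hcard ▸ X_pow_sub_X_dvd_X_pow_pow_sub_X (by omega) n)
    rw [splits_iff_card_roots, roots_X_pow_card_sub_X,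
      X_pow_card_sub_X_natDegree_eq K Fintype.one_lt_card]
    rfl
  have hsep : (X ^ q - X : K[X]).Separable := by
    rw [separable_def, derivative_sub, derivative_X_pow, hqK, C_0, zero_mul, derivative_X,
      zero_sub]
    exact isCoprime_one_right.neg_right
  have hset : {y : K | y ^ q = y} = ↑(X ^ q - X : K[X]).roots.toFinset := by
    ext y
    simp [mem_roots hP, sub_eq_zero]
  rw [hset, Set.ncard_coe_finset, Multiset.toFinset_card_of_nodup (nodup_roots hsep),
    splits_iff_card_roots.1 hsplits, X_pow_card_sub_X_natDegree_eq K hq]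

theorem X_pow_card_sub_X_eq_prod :
    (X ^ Fintype.card K - X : K[X]) = ∏ a : K, (X - C a) := by
  have hmonic : (X ^ Fintype.card K - X : K[X]).Monic :=
    monic_X_pow_sub (by rw [degree_X]; exact_mod_cast Fintype.one_lt_card)
  have hcard : (X ^ Fintype.card K - X : K[X]).roots.card =
      (X ^ Fintype.card K - X : K[X]).natDegree := by
    rw [roots_X_pow_card_sub_X, X_pow_card_sub_X_natDegree_eq K Fintype.one_lt_card]; rfl
  rw [← prod_multiset_X_sub_C_of_monic_of_roots_card_eq hmonic hcard, roots_X_pow_card_sub_X]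
  rfl

theorem X_pow_card_sub_X_dvd {P : K[X]} (hP : ∀ a, P.IsRoot a) :
    X ^ Fintype.card K - X ∣ P := by
  rw [X_pow_card_sub_X_eq_prod]
  exact Finset.prod_dvd_of_coprime
    ((pairwise_coprime_X_sub_C Function.injective_id).set_pairwise _)
    fun a _ => dvd_iff_isRoot.2 (hP a)

theorem rootMultiplicity_map_X_pow_card_sub_X {L : Type*} [Field L] (φ : K →+* L) (β : L)
    [Decidable (β ∈ Set.range φ)] :
    ((X ^ Fintype.card K - X : K[X]).map φ).rootMultiplicity β =
      if β ∈ Set.range φ then 1 else 0 := by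
  classical
  have hroots : ((X ^ Fintype.card K - X : K[X]).map φ).roots = Finset.univ.val.map φ := by
    rw [X_pow_card_sub_X_eq_prod, Polynomial.map_prod]
    simp only [Polynomial.map_sub, map_X, map_C]
    rw [Finset.prod_eq_multiset_prod, ← roots_multiset_prod_X_sub_C (Finset.univ.val.map φ),
      Multiset.map_map]
    rfl
  rw [← count_roots, hroots]
  split_ifs with hβ
  · obtain ⟨a, rfl⟩ := hβ
    rw [Multiset.count_map_eq_count' _ _ φ.injective]
    exact Multiset.count_eq_one_of_mem Finset.univ.nodup (Finset.mem_univ a)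
  · exact Multiset.count_eq_zero.2 fun hmem => hβ (by simpa using hmem)

theorem pow_sub_self_eq_X_pow_card_sub_X_mul_derivative {F : K[X]} {q : ℕ} (hq : 1 < q)
    (hqK : (q : K) = 0) (hF : ∀ a, F.eval a ^ q = F.eval a)
    (hdeg : (q - 1) * F.natDegree < Fintype.card K) :
    F ^ q - F = (X ^ Fintype.card K - X) * derivative F := by
  set S : K[X] := X ^ Fintype.card K - X
  obtain ⟨G, hG⟩ : S ∣ F ^ q - F := X_pow_card_sub_X_dvd fun a => by simp [hF]
  have hG' : G - derivative F = S * derivative G := by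
    have h := congrArg derivative hG
    rw [derivative_sub, derivative_pow, hqK, derivative_mul, derivative_sub, derivative_X_pow,
      derivative_X, cast_card_eq_zero] at h
    simp only [C_0, zero_mul] at h
    linear_combination h
  suffices derivative G = 0 by rw [hG, sub_eq_zero.1 (hG'.trans (by rw [this, mul_zero]))]
  by_contra hG0
  set d := F.natDegree
  have hS0 : S ≠ 0 := X_pow_card_sub_X_ne_zero K Fintype.one_lt_card
  have hSdeg : S.natDegree = Fintype.card K :=
    X_pow_card_sub_X_natDegree_eq K Fintype.one_lt_card
  have hd : d < Fintype.card K := (Nat.le_mul_of_pos_left d (by omega)).trans_lt hdeg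
  have hGdeg : Fintype.card K + G.natDegree ≤ q * d := by
    have hG0' : G ≠ 0 := fun h => hG0 (by rw [h, derivative_zero])
    rw [← hSdeg, ← natDegree_mul hS0 hG0', ← hG]
    exact (natDegree_sub_le _ _).trans
      (max_le natDegree_pow_le (Nat.le_mul_of_pos_left d (by omega)))
  have hqd : q * d = (q - 1) * d + d := by
    rw [← Nat.succ_mul, Nat.succ_eq_add_one, Nat.sub_add_cancel hq.le]
  refine lt_irrefl (Fintype.card K) (calc Fintype.card K
      ≤ (S * derivative G).natDegree := by rw [natDegree_mul hS0 hG0, hSdeg]; omega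
    _ = (G - derivative F).natDegree := by rw [hG']
    _ ≤ max G.natDegree (derivative F).natDegree := natDegree_sub_le _ _
    _ < Fintype.card K := max_lt (by omega) ((natDegree_derivative_le F).trans_lt (by omega)))

end FiniteField

open FiniteField

theorem stmt_2_general (p e n : ℕ) [Fact p.Prime] (he : 0 < e)
    (q : ℕ) (hq : q = p ^ e)
    (K : Type*) [Field K] [Fintype K] (hcard : Fintype.card K = q ^ n) (hchar : CharP K p)
    (F : Polynomial K) (hF : 0 < F.natDegree)
    (hV : {y : K | ∃ α : K, F.eval α = y} = {y : K | y ^ q = y})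
    (hmin : Set.ncard {y : K | ∃ α : K, F.eval α = y} = (q ^ n - 1) / F.natDegree + 1)
    (γ : K) (hγ : γ ^ q = γ)
    (β : AlgebraicClosure K)
    (hβ : (Polynomial.map (algebraMap K (AlgebraicClosure K)) F
        - Polynomial.C ((algebraMap K (AlgebraicClosure K)) γ)).IsRoot β) :
    β ∉ Set.range (algebraMap K (AlgebraicClosure K)) ↔
      p ∣ (Polynomial.map (algebraMap K (AlgebraicClosure K)) F
        - Polynomial.C ((algebraMap K (AlgebraicClosure K)) γ)).rootMultiplicity β := by
  classical
  set φ := algebraMap K (AlgebraicClosure K)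
  set u := F.map φ - C (φ γ) with hu_def
  have hq1 : 1 < q := hq ▸ Nat.one_lt_pow he.ne' (Fact.out : p.Prime).one_lt
  have hqK : (q : K) = 0 := (CharP.cast_eq_zero_iff K p q).2 (hq ▸ dvd_pow_self p he.ne')
  have hvals (a : K) : F.eval a ^ q = F.eval a := (hV.subset ⟨a, rfl⟩ :)
  have hdeg : (q - 1) * F.natDegree < Fintype.card K := by
    rw [hV, ncard_setOf_pow_eq_self hq1 hqK hcard] at hmin
    have := Nat.div_mul_le_self (q ^ n - 1) F.natDegree
    rw [show (q ^ n - 1) / F.natDegree = q - 1 by omega] at this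
    have := Fintype.card_pos (α := K)
    omega
  have hu : u ^ q - u = (X ^ Fintype.card K - X : K[X]).map φ * derivative u := by
    have hfrob : u ^ q - u = (F ^ q - F).map φ := by
      rw [hu_def, hq, sub_pow_char_pow, ← hq, ← C_pow, ← map_pow, hγ, Polynomial.map_sub,
        Polynomial.map_pow]
      ring
    rw [hfrob, pow_sub_self_eq_X_pow_card_sub_X_mul_derivative hq1 hqK hvals hdeg,
      Polynomial.map_mul, ← derivative_map, hu_def, derivative_sub, derivative_C, sub_zero]
  have hne : u ^ q - u ≠ 0 := by
    refine pow_sub_self_ne_zero (ne_zero_of_natDegree_gt (n := 0) ?_) hβ hq1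
    rwa [hu_def, natDegree_sub_C, natDegree_map]
  have hmult : u.rootMultiplicity β =
      (if β ∈ Set.range φ then 1 else 0) + (derivative u).rootMultiplicity β := by
    rw [← rootMultiplicity_pow_sub_self hβ hq1, hu, rootMultiplicity_mul (hu ▸ hne),
      rootMultiplicity_map_X_pow_card_sub_X]
  rw [dvd_rootMultiplicity_iff_le_rootMultiplicity_derivative hβ
    (right_ne_zero_of_mul (hu ▸ hne))]
  by_cases hmem : β ∈ Set.range φ <;>
    simp only [hmem, if_true, if_false, not_true_eq_false, not_false_eq_true, false_iff,
      true_iff] at hmult ⊢ <;> omega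

/-- if `F` is a nonconstant minimal value set polynomial over `𝔽_{q^n}`
(`#V_F = ⌊(q^n−1)/deg F⌋ + 1`) with value set `V_F = 𝔽_q = {y : y^q = y}`, then for each
`γ ∈ 𝔽_q`, a root `β` (in the algebraic closure) of `F(x) − γ` lies outside `𝔽_{q^n}`
iff its multiplicity is divisible by `p`. -/
theorem stmt_2 (p e n : ℕ) [Fact p.Prime] (he : 0 < e) (hn : 2 ≤ n)
    (q : ℕ) (hq : q = p ^ e)
    (K : Type*) [Field K] [Fintype K] (hcard : Fintype.card K = q ^ n) (hchar : CharP K p)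
    (F : Polynomial K) (hF : 0 < F.natDegree)
    (hV : {y : K | ∃ α : K, F.eval α = y} = {y : K | y ^ q = y})
    (hmin : Set.ncard {y : K | ∃ α : K, F.eval α = y} = (q ^ n - 1) / F.natDegree + 1)
    (γ : K) (hγ : γ ^ q = γ)
    (β : AlgebraicClosure K)
    (hβ : (Polynomial.map (algebraMap K (AlgebraicClosure K)) F
        - Polynomial.C ((algebraMap K (AlgebraicClosure K)) γ)).IsRoot β) :
    β ∉ Set.range (algebraMap K (AlgebraicClosure K)) ↔
      p ∣ (Polynomial.map (algebraMap K (AlgebraicClosure K)) F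
        - Polynomial.C ((algebraMap K (AlgebraicClosure K)) γ)).rootMultiplicity β :=
  stmt_2_general p e n he q hq K hcard hchar F hF hV hmin γ hγ β hβ
end

section
/- Let K be the algebraic closure of F_q and F = K(x) the rational function field. Let u(x), v(x) ∈ F_{q^n}[x] with deg u ≡ 1 mod p and deg v < deg u. Suppose w = −T_δ(α^{q^{n−δ+1}}) u(x) − α^{q^{n−δ}} v(x) with T_n(α) = 0 and gcd(δ, n) = 1, and suppose the polynomial X^p − X − w has a root in K(x). Then α = 0 and w = 0. -/
/-!
An Artin–Schreier root of `w` in `K(x)` is integral over the integrally closed ring `K[x]`, hence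
a polynomial `h`, and then `deg w = deg (h ^ p - h)` is `0` or `p · deg h`, divisible by `p`.
Since `deg u ≡ 1 (mod p)` and `deg v < deg u`, the coefficient
`T_δ(α^{q^{n-δ+1}}) = T_δ(α)^{q^{n-δ+1}}` of `u` in `w` must vanish. Additivity of Frobenius gives
`T_{a+b}(α) = T_a(α) + T_b(α)^{q^a}`, so the indices `k` with `T_k(α) = 0` are closed under the
Euclidean algorithm; from `T_n(α) = T_δ(α) = 0` and `gcd(δ, n) = 1` we get `α = T_1(α) = 0`.
-/

open Polynomial Finset

section FrobeniusTrace

variable {R : Type*} [CommSemiring R] (p e : ℕ) [ExpChar R p]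

/-- The paper's `T_k`. -/
def frobTrace (q k : ℕ) (α : R) : R := ∑ i ∈ range k, α ^ q ^ i

theorem frobTrace_pow (k m : ℕ) (α : R) :
    frobTrace (p ^ e) k α ^ (p ^ e) ^ m = frobTrace (p ^ e) k (α ^ (p ^ e) ^ m) := by
  rw [frobTrace, frobTrace, ← pow_mul, sum_pow_char_pow]
  exact sum_congr rfl fun i _ => by rw [pow_mul, pow_right_comm]

theorem frobTrace_add (a b : ℕ) (α : R) :
    frobTrace (p ^ e) (a + b) α
      = frobTrace (p ^ e) a α + frobTrace (p ^ e) b α ^ (p ^ e) ^ a := by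
  rw [frobTrace_pow, frobTrace, frobTrace, frobTrace, sum_range_add]
  exact congrArg _ (sum_congr rfl fun i _ => by ring)

variable {p e}

theorem frobTrace_mul_eq_zero {a : ℕ} {α : R} (ha : frobTrace (p ^ e) a α = 0) (k : ℕ) :
    frobTrace (p ^ e) (a * k) α = 0 := by
  induction k with
  | zero => simp [frobTrace]
  | succ k ih =>
    rw [Nat.mul_succ, frobTrace_add, ih, ha, zero_add,
      zero_pow (pow_ne_zero _ (expChar_pow_pos R p e).ne')]

variable [IsReduced R]

theorem frobTrace_gcd_eq_zero {a b : ℕ} {α : R} (ha : frobTrace (p ^ e) a α = 0)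
    (hb : frobTrace (p ^ e) b α = 0) : frobTrace (p ^ e) (Nat.gcd a b) α = 0 := by
  induction a, b using Nat.gcd.induction with
  | H0 b => simpa using hb
  | H1 a b _ ih =>
    rw [Nat.gcd_rec]
    refine ih ?_ ha
    have hsplit := frobTrace_add p e (a * (b / a)) (b % a) α
    rw [Nat.div_add_mod, hb, frobTrace_mul_eq_zero ha, zero_add] at hsplit
    exact IsReduced.eq_zero _ ⟨_, hsplit.symm⟩

end FrobeniusTrace

section ArtinSchreier

variable {p : ℕ}

theorem exists_pow_sub_self_eq_of_isFractionRing {R F : Type*} [CommRing R] [IsDomain R]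
    [IsIntegrallyClosed R] [Field F] [Algebra R F] [IsFractionRing R F] (hp : 1 < p) {w : R}
    {g : F} (hg : g ^ p - g = algebraMap R F w) : ∃ h : R, h ^ p - h = w := by
  have hint : IsIntegral R g := by
    refine ⟨X ^ p - (X + C w), monic_X_pow_sub ?_, ?_⟩
    · refine (degree_add_le _ _).trans_lt (max_lt ?_ (degree_C_le.trans_lt ?_))
      · rw [degree_X]; exact_mod_cast hp
      · exact_mod_cast hp.pos
    · rw [eval₂_sub, eval₂_add, eval₂_X_pow, eval₂_X, eval₂_C, ← hg]
      ring
  obtain ⟨h, hh⟩ := IsIntegrallyClosed.isIntegral_iff.mp hint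
  exact ⟨h, IsFractionRing.injective R F (by rw [map_sub, map_pow, hh, hg])⟩

theorem Polynomial.dvd_natDegree_pow_sub_self {R : Type*} [CommRing R] [IsDomain R]
    (hp : 1 < p) (h : R[X]) : p ∣ (h ^ p - h).natDegree := by
  rcases Nat.eq_zero_or_pos h.natDegree with h0 | hpos
  · have : (h ^ p - h).natDegree = 0 :=
      Nat.le_zero.mp ((natDegree_sub_le _ _).trans (by simp [natDegree_pow, h0]))
    simp [this]
  · have hlt : h.natDegree < (h ^ p).natDegree := by
      rw [natDegree_pow]
      nlinarith
    rw [natDegree_sub_eq_left_of_natDegree_lt hlt, natDegree_pow]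
    exact dvd_mul_right _ _

end ArtinSchreier

theorem Polynomial.natDegree_neg_C_mul_sub_C_mul {K : Type*} [Field K] {c d : K} (hc : c ≠ 0)
    {u v : K[X]} (huv : v.natDegree < u.natDegree) :
    (-C c * u - C d * v).natDegree = u.natDegree := by
  have hlead : (-C c * u).natDegree = u.natDegree := by
    rw [← C_neg, natDegree_C_mul (neg_ne_zero.mpr hc)]
  rw [natDegree_sub_eq_left_of_natDegree_lt, hlead]
  exact (natDegree_C_mul_le _ _).trans_lt (hlead ▸ huv)

theorem stmt_3_general (p e : ℕ) [Fact p.Prime] (q : ℕ) (hq : q = p ^ e)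
    (n δ : ℕ) (hcop : Nat.gcd δ n = 1)
    (K : Type*) [Field K] [CharP K p]
    (u v : Polynomial K)
    (hdegu : u.natDegree % p = 1) (hdegv : v.natDegree < u.natDegree)
    (α : K) (hα : ∑ i ∈ Finset.range n, α ^ q ^ i = 0)
    (w : Polynomial K)
    (hw : w = - Polynomial.C (∑ i ∈ Finset.range δ, (α ^ q ^ (n - δ + 1)) ^ q ^ i) * u
        - Polynomial.C (α ^ q ^ (n - δ)) * v)
    (hroot : ∃ g : RatFunc K, g ^ p - g = algebraMap (Polynomial K) (RatFunc K) w) :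
    α = 0 ∧ w = 0 := by
  subst hq
  have hp : 1 < p := (Fact.out : p.Prime).one_lt
  obtain ⟨g, hg⟩ := hroot
  obtain ⟨h, rfl⟩ := exists_pow_sub_self_eq_of_isFractionRing hp hg
  have hTδ : frobTrace (p ^ e) δ α = 0 := by
    by_contra hne
    have hc : frobTrace (p ^ e) δ (α ^ (p ^ e) ^ (n - δ + 1)) ≠ 0 :=
      frobTrace_pow p e δ _ α ▸ pow_ne_zero _ hne
    have hdeg : (h ^ p - h).natDegree = u.natDegree := by
      rw [hw]
      exact natDegree_neg_C_mul_sub_C_mul hc hdegv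
    have hdvd := h.dvd_natDegree_pow_sub_self hp
    rw [hdeg, Nat.dvd_iff_mod_eq_zero, hdegu] at hdvd
    exact one_ne_zero hdvd
  have hα0 : α = 0 := by simpa [hcop, frobTrace] using frobTrace_gcd_eq_zero hTδ hα
  subst hα0
  refine ⟨rfl, ?_⟩
  simp [hw, (Fact.out : p.Prime).ne_zero]

/-- Let `K` be an algebraic closure of `𝔽_q` (q = p^e), and let
`u, v ∈ 𝔽_{q^n}[x] ⊆ K[x]` with `deg u ≡ 1 (mod p)` and `deg v < deg u`. If
`w = −T_δ(α^{q^{n−δ+1}})·u − α^{q^{n−δ}}·v` where `T_n(α) = 0`, `gcd(δ, n) = 1`, and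
`X^p − X − w` has a root in `K(x)`, then `α = 0` and `w = 0`. -/
theorem stmt_3 (p e : ℕ) [Fact p.Prime] (he : 0 < e) (q : ℕ) (hq : q = p ^ e)
    (n δ : ℕ) (hn : 2 ≤ n) (hδ1 : 1 ≤ δ) (hδn : δ < n) (hcop : Nat.gcd δ n = 1)
    (K : Type*) [Field K] [IsAlgClosed K] [CharP K p]
    (u v : Polynomial K)
    (hu : ∀ i, (u.coeff i) ^ q ^ n = u.coeff i)  -- u has coefficients in 𝔽_{q^n}
    (hv : ∀ i, (v.coeff i) ^ q ^ n = v.coeff i)  -- v has coefficients in 𝔽_{q^n}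
    (hdegu : u.natDegree % p = 1) (hdegv : v.natDegree < u.natDegree)
    (α : K) (hα : ∑ i ∈ Finset.range n, α ^ q ^ i = 0)
    (w : Polynomial K)
    (hw : w = - Polynomial.C (∑ i ∈ Finset.range δ, (α ^ q ^ (n - δ + 1)) ^ q ^ i) * u
        - Polynomial.C (α ^ q ^ (n - δ)) * v)
    (hroot : ∃ g : RatFunc K, g ^ p - g = algebraMap (Polynomial K) (RatFunc K) w) :
    α = 0 ∧ w = 0 :=
  stmt_3_general p e q hq n δ hcop K u v hdegu hdegv α hα w hw hroot
end

section
/- Let u ∈ K[x] be a nonconstant polynomial over an algebraically closed field K with p ∤ deg u (p = char K > 0). Then the polynomial X^p − X − u(x) has no root in K(x). -/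
/-- over an algebraically closed field `K` of characteristic `p > 0`, if
`u ∈ K[x]` is nonconstant with `p ∤ deg u`, then `X^p − X − u(x)` has no root in `K(x)`. -/
theorem stmt_4 (p : ℕ) [Fact p.Prime] (K : Type*) [Field K] [IsAlgClosed K] [CharP K p]
    (u : Polynomial K) (hu : 0 < u.natDegree) (hdeg : ¬ p ∣ u.natDegree) :
    ¬ ∃ g : RatFunc K, g ^ p - g = algebraMap (Polynomial K) (RatFunc K) u := by
  rintro ⟨g, hg⟩
  have hp2 : 2 ≤ p := (Fact.out : p.Prime).two_le
  -- g is integral over K[x]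
  have hint : IsIntegral (Polynomial K) g := by
    refine ⟨Polynomial.X ^ p - (Polynomial.X + Polynomial.C u), ?_, ?_⟩
    · apply Polynomial.monic_X_pow_sub
      refine lt_of_le_of_lt (Polynomial.degree_add_le _ _) ?_
      rw [max_lt_iff]
      constructor
      · exact lt_of_le_of_lt Polynomial.degree_X_le (by exact_mod_cast hp2)
      · exact lt_of_le_of_lt Polynomial.degree_C_le (by positivity)
    · simp only [Polynomial.eval₂_sub, Polynomial.eval₂_add, Polynomial.eval₂_pow,
        Polynomial.eval₂_X, Polynomial.eval₂_C]
      rw [sub_add_eq_sub_sub, hg, sub_self]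
  obtain ⟨q, hq⟩ := IsIntegrallyClosed.isIntegral_iff.mp hint
  subst hq
  have hq' : q ^ p - q = u := by
    apply IsFractionRing.injective (Polynomial K) (RatFunc K)
    rw [map_sub, map_pow]
    exact hg
  -- degree analysis
  rcases Nat.eq_zero_or_pos q.natDegree with h0 | hpos
  · have : (q ^ p - q).natDegree = 0 := by
      have h1 : (q ^ p).natDegree = 0 := by
        rw [Polynomial.natDegree_pow, h0, mul_zero]
      exact le_antisymm (le_trans (Polynomial.natDegree_sub_le _ _) (by omega)) (Nat.zero_le _)
    rw [hq'] at this
    omega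
  · have hlt : q.natDegree < (q ^ p).natDegree := by
      rw [Polynomial.natDegree_pow]
      calc q.natDegree = 1 * q.natDegree := (one_mul _).symm
        _ < p * q.natDegree := (Nat.mul_lt_mul_right hpos).mpr (by omega)
    have : (q ^ p - q).natDegree = p * q.natDegree := by
      rw [Polynomial.natDegree_sub_eq_left_of_natDegree_lt hlt, Polynomial.natDegree_pow]
    rw [hq'] at this
    exact hdeg ⟨q.natDegree, this⟩
end

section
/- The numerical semigroup H = ⟨q^{n−1}, q^{n−1} + q^{r−1}, q^{2r−1} + q^{n−r−1}, q^{2r} − q^n + q^r + 1⟩ is telescopic: with generators a_1 = q^{n−1}, a_2 = q^{n−1}+q^{r−1}, a_3 = q^{2r−1}+q^{n−r−1}, a_4 = q^{2r}−q^n+q^r+1, and d_i = gcd(a_1,...,a_i), one has a_{i+1}/d_{i+1} ∈ ⟨a_1/d_i, ..., a_i/d_i⟩ for each i. -/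
/-- The four generators `a₁ = q^{n−1}`, `a₂ = q^{n−1}+q^{r−1}`, `a₃ = q^{2r−1}+q^{n−r−1}`,
`a₄ = q^{2r}−q^n+q^r+1` (0-indexed). -/
def tgA (q n r : ℕ) : Fin 4 → ℕ :=
  ![q ^ (n - 1), q ^ (n - 1) + q ^ (r - 1), q ^ (2 * r - 1) + q ^ (n - r - 1),
    q ^ (2 * r) - q ^ n + q ^ r + 1]

/-- `dᵢ = gcd(a₁, …, aᵢ)` (0-indexed: gcd of `a₀, …, aᵢ`). -/
def tgD (q n r : ℕ) (i : Fin 4) : ℕ :=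
  (Finset.univ.filter (· ≤ i)).gcd (tgA q n r)

/-! The generators only share powers of `q`: writing `n = 2a + b + 3` and `r = a + b + 2`
(possible exactly when `n/2 < r < n`), one has `a₁ = q^{2a+b+2}`, `a₂ = q^{a+b+1} (q^{a+1} + 1)`,
`a₃ = q^a (q^{a+2b+3} + 1)` and `a₄ ≡ 1 (mod q)`, so `d₂ = q^{a+b+1}`, `d₃ = q^a`, `d₄ = 1`.
For `q ≥ 1` each quotient `a_{i+1}/d_{i+1}` is then an explicit combination `k • y + z` of two
of the `a_j/d_i`:
`q^{a+1} + 1 = q^{a+1} • 1 + 1`,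
`q^{a+2b+3} + 1 = (q^{2b+2} - 1) • q^{a+1} + (q^{a+1} + 1)` and
`a₄ = ((q^{a+1} - 1)(q^{b+1} - 1)) • q^{a+b+2} + (q^{a+2b+3} + 1)`. -/

theorem coprime_pow_mul_add_one (q k m : ℕ) : Nat.Coprime (q ^ k) (q * m + 1) :=
  Nat.Coprime.pow_left k ((Nat.coprime_mul_left_add_right q 1 m).2 (Nat.coprime_one_right q))

theorem AddSubmonoid.mem_closure_of_eq_nsmul_add {M : Type*} [AddMonoid M] {s : Set M}
    {x y z : M} (hy : y ∈ s) (hz : z ∈ s) (k : ℕ) (h : x = k • y + z) :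
    x ∈ AddSubmonoid.closure s :=
  h ▸ add_mem (nsmul_mem (subset_closure hy) k) (subset_closure hz)

theorem tgD_zero (q n r : ℕ) : tgD q n r 0 = tgA q n r 0 := by
  have hs : Finset.univ.filter (· ≤ (0 : Fin 4)) = {0} := by decide
  rw [tgD, hs, Finset.gcd_singleton, normalize_eq]

theorem tgD_succ (q n r : ℕ) (i : Fin 3) :
    tgD q n r i.succ = Nat.gcd (tgD q n r i.castSucc) (tgA q n r i.succ) := by
  have hs : Finset.univ.filter (· ≤ i.succ) =
      insert i.succ (Finset.univ.filter (· ≤ i.castSucc)) := by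
    revert i; decide
  rw [tgD, hs, Finset.gcd_insert, Nat.gcd_comm]
  rfl

section Parametrized

variable (q a b : ℕ)

theorem tgA_zero_eq : tgA q (2 * a + b + 3) (a + b + 2) 0 = q ^ (a + b + 1) * q ^ (a + 1) := by
  rw [← pow_add]
  exact congrArg (q ^ ·) (by omega)

theorem tgA_zero_eq' : tgA q (2 * a + b + 3) (a + b + 2) 0 = q ^ a * q ^ (a + b + 2) := by
  rw [← pow_add]
  exact congrArg (q ^ ·) (by omega)

theorem tgA_one_eq :
    tgA q (2 * a + b + 3) (a + b + 2) 1 = q ^ (a + b + 1) * (q ^ (a + 1) + 1) := by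
  show q ^ (2 * a + b + 3 - 1) + q ^ (a + b + 2 - 1) = _
  rw [show 2 * a + b + 3 - 1 = a + b + 1 + (a + 1) by omega,
    show a + b + 2 - 1 = a + b + 1 by omega, pow_add]
  ring

theorem tgA_two_eq :
    tgA q (2 * a + b + 3) (a + b + 2) 2 = q ^ a * (q ^ (a + 2 * b + 3) + 1) := by
  show q ^ (2 * (a + b + 2) - 1) + q ^ (2 * a + b + 3 - (a + b + 2) - 1) = _
  rw [show 2 * (a + b + 2) - 1 = a + (a + 2 * b + 3) by omega,
    show 2 * a + b + 3 - (a + b + 2) - 1 = a by omega, pow_add]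
  ring

theorem tgA_three_eq (hq : 0 < q) :
    tgA q (2 * a + b + 3) (a + b + 2) 3 =
      (q ^ (a + 1) - 1) * (q ^ (b + 1) - 1) * q ^ (a + b + 2) + (q ^ (a + 2 * b + 3) + 1) := by
  show q ^ (2 * (a + b + 2)) - q ^ (2 * a + b + 3) + q ^ (a + b + 2) + 1 = _
  have hle : q ^ (2 * a + b + 3) ≤ q ^ (2 * (a + b + 2)) := Nat.pow_le_pow_right hq (by omega)
  have ha : 1 ≤ q ^ (a + 1) := Nat.one_le_pow _ _ hq
  have hb : 1 ≤ q ^ (b + 1) := Nat.one_le_pow _ _ hq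
  zify [hle, ha, hb]
  rw [show 2 * (a + b + 2) = (a + 1) + ((b + 1) + (a + b + 2)) by omega,
    show 2 * a + b + 3 = (a + 1) + (a + b + 2) by omega,
    show a + 2 * b + 3 = (b + 1) + (a + b + 2) by omega]
  push_cast [pow_add]
  ring

theorem tgD_one_eq : tgD q (2 * a + b + 3) (a + b + 2) 1 = q ^ (a + b + 1) := by
  rw [show (1 : Fin 4) = (0 : Fin 3).succ from rfl, tgD_succ]
  show Nat.gcd (tgD _ _ _ 0) (tgA _ _ _ 1) = _
  rw [tgD_zero, tgA_zero_eq, tgA_one_eq, Nat.gcd_mul_left, Nat.coprime_self_add_right.2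
    (Nat.coprime_one_right _), mul_one]

theorem tgD_two_eq : tgD q (2 * a + b + 3) (a + b + 2) 2 = q ^ a := by
  rw [show (2 : Fin 4) = (1 : Fin 3).succ from rfl, tgD_succ]
  show Nat.gcd (tgD _ _ _ 1) (tgA _ _ _ 2) = _
  rw [tgD_one_eq, tgA_two_eq, show a + b + 1 = a + (b + 1) by omega, pow_add, Nat.gcd_mul_left,
    pow_succ' q (a + 2 * b + 2), (coprime_pow_mul_add_one q (b + 1) _).gcd_eq_one, mul_one]

theorem tgD_three_eq : tgD q (2 * a + b + 3) (a + b + 2) 3 = 1 := by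
  rw [show (3 : Fin 4) = (2 : Fin 3).succ from rfl, tgD_succ]
  show Nat.gcd (tgD _ _ _ 2) (tgA _ _ _ 3) = _
  obtain ⟨m, hm⟩ : q ∣ q ^ (2 * (a + b + 2)) - q ^ (2 * a + b + 3) + q ^ (a + b + 2) :=
    dvd_add (Nat.dvd_sub (dvd_pow_self q (by omega)) (dvd_pow_self q (by omega)))
      (dvd_pow_self q (by omega))
  rw [tgD_two_eq]
  show Nat.gcd (q ^ a) (q ^ (2 * (a + b + 2)) - q ^ (2 * a + b + 3) + q ^ (a + b + 2) + 1) = 1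
  rw [hm]
  exact coprime_pow_mul_add_one q a m

variable {q}

theorem tgA_div_tgD_one_mem_closure (hq : 0 < q) :
    tgA q (2 * a + b + 3) (a + b + 2) 1 / tgD q (2 * a + b + 3) (a + b + 2) 1 ∈
      AddSubmonoid.closure ((fun j : Fin 4 => tgA q (2 * a + b + 3) (a + b + 2) j /
        tgD q (2 * a + b + 3) (a + b + 2) 0) '' {j | j ≤ 0}) := by
  have hgen : tgA q (2 * a + b + 3) (a + b + 2) 0 / tgD q (2 * a + b + 3) (a + b + 2) 0 = 1 := by
    rw [tgD_zero, Nat.div_self (by rw [tgA_zero_eq]; positivity)]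
  refine AddSubmonoid.mem_closure_of_eq_nsmul_add ⟨0, by decide, hgen⟩ ⟨0, by decide, hgen⟩
    (q ^ (a + 1)) ?_
  rw [tgA_one_eq, tgD_one_eq, Nat.mul_div_cancel_left _ (by positivity), smul_eq_mul, mul_one]

theorem tgA_div_tgD_two_mem_closure (hq : 0 < q) :
    tgA q (2 * a + b + 3) (a + b + 2) 2 / tgD q (2 * a + b + 3) (a + b + 2) 2 ∈
      AddSubmonoid.closure ((fun j : Fin 4 => tgA q (2 * a + b + 3) (a + b + 2) j /
        tgD q (2 * a + b + 3) (a + b + 2) 1) '' {j | j ≤ 1}) := by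
  have hpos : 0 < q ^ (a + b + 1) := by positivity
  refine AddSubmonoid.mem_closure_of_eq_nsmul_add (y := q ^ (a + 1)) (z := q ^ (a + 1) + 1)
    ⟨0, by decide, ?_⟩ ⟨1, by decide, ?_⟩ (q ^ (2 * b + 2) - 1) ?_
  · dsimp only
    rw [tgA_zero_eq, tgD_one_eq, Nat.mul_div_cancel_left _ hpos]
  · dsimp only
    rw [tgA_one_eq, tgD_one_eq, Nat.mul_div_cancel_left _ hpos]
  · rw [tgA_two_eq, tgD_two_eq, Nat.mul_div_cancel_left _ (by positivity), smul_eq_mul]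
    have h : 1 ≤ q ^ (2 * b + 2) := Nat.one_le_pow _ _ hq
    zify [h]
    rw [show a + 2 * b + 3 = (2 * b + 2) + (a + 1) by omega]
    push_cast [pow_add]
    ring

theorem tgA_div_tgD_three_mem_closure (hq : 0 < q) :
    tgA q (2 * a + b + 3) (a + b + 2) 3 / tgD q (2 * a + b + 3) (a + b + 2) 3 ∈
      AddSubmonoid.closure ((fun j : Fin 4 => tgA q (2 * a + b + 3) (a + b + 2) j /
        tgD q (2 * a + b + 3) (a + b + 2) 2) '' {j | j ≤ 2}) := by
  have hpos : 0 < q ^ a := by positivity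
  refine AddSubmonoid.mem_closure_of_eq_nsmul_add (y := q ^ (a + b + 2))
    (z := q ^ (a + 2 * b + 3) + 1) ⟨0, by decide, ?_⟩ ⟨2, by decide, ?_⟩
    ((q ^ (a + 1) - 1) * (q ^ (b + 1) - 1)) ?_
  · dsimp only
    rw [tgA_zero_eq', tgD_two_eq, Nat.mul_div_cancel_left _ hpos]
  · dsimp only
    rw [tgA_two_eq, tgD_two_eq, Nat.mul_div_cancel_left _ hpos]
  · rw [tgD_three_eq, Nat.div_one, tgA_three_eq _ _ _ hq, smul_eq_mul]

end Parametrized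

theorem stmt_10_general (p e q n r : ℕ) (hp : Nat.Prime p) (hq : q = p ^ e)
    (h1 : n < 2 * r) (h2 : r < n) :
    ∀ i : Fin 4, ∀ h : (i : ℕ) + 1 < 4,
      tgA q n r ⟨(i : ℕ) + 1, h⟩ / tgD q n r ⟨(i : ℕ) + 1, h⟩ ∈
        AddSubmonoid.closure ((fun j : Fin 4 => tgA q n r j / tgD q n r i) '' {j | j ≤ i}) := by
  have hq0 : 0 < q := hq ▸ pow_pos hp.pos e
  obtain ⟨a, b, rfl, rfl⟩ : ∃ a b, n = 2 * a + b + 3 ∧ r = a + b + 2 :=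
    ⟨n - r - 1, 2 * r - n - 1, by omega, by omega⟩
  intro i h
  fin_cases i
  · exact tgA_div_tgD_one_mem_closure a b hq0
  · exact tgA_div_tgD_two_mem_closure a b hq0
  · exact tgA_div_tgD_three_mem_closure a b hq0
  · exact absurd h (by decide)

/-- the numerical semigroup
`H = ⟨q^{n−1}, q^{n−1}+q^{r−1}, q^{2r−1}+q^{n−r−1}, q^{2r}−q^n+q^r+1⟩` is telescopic:
with `dᵢ = gcd(a₁,…,aᵢ)`, one has `a_{i+1}/d_{i+1} ∈ ⟨a₁/dᵢ, …, aᵢ/dᵢ⟩` for each `i`. -/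
theorem stmt_10 (p e q n r : ℕ) (hp : Nat.Prime p) (he : 0 < e) (hq : q = p ^ e)
    (hn : 3 ≤ n) (h1 : n < 2 * r) (h2 : r < n) (hcop : Nat.gcd n r = 1) :
    ∀ i : Fin 4, ∀ h : (i : ℕ) + 1 < 4,
      tgA q n r ⟨(i : ℕ) + 1, h⟩ / tgD q n r ⟨(i : ℕ) + 1, h⟩ ∈
        AddSubmonoid.closure ((fun j : Fin 4 => tgA q n r j / tgD q n r i) '' {j | j ≤ i}) :=
  stmt_10_general p e q n r hp hq h1 h2
end

section
/- A telescopic numerical semigroup is symmetric: if S = ⟨a_1,...,a_k⟩ is telescopic with gcd(a_1,...,a_k) = 1 and Frobenius number F, then for every integer z, exactly one of z ∈ S and F − z ∈ S holds. -/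
/-!
Gluing: if `T ⊆ ℕ` is symmetric about `F`, `d > 0` and `c ∈ T` is coprime to `d`, then
`S = d • T + ℕ c` is symmetric about `d F + (d - 1) c`. Indeed every integer is uniquely
`z = d w + t c` with `0 ≤ t < d`, and `z ∈ S ↔ w ∈ T`; then
`d F + (d - 1) c - z = d (F - w) + (d - 1 - t) c`.

For a telescopic sequence put `d = gcd(a₁, …, a_{k-1})`. Then `⟨a₁, …, a_k⟩` is
`d • ⟨a₁/d, …, a_{k-1}/d⟩ + ℕ a_k`, where the smaller semigroup is again telescopic with
gcd `1`, contains `a_k` and `gcd(a_k, d) = 1`; induct on `k`, starting from `⟨1⟩ = ℕ`,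
which is symmetric about `-1`.
-/

def AddSubmonoid.toIntSet (S : AddSubmonoid ℕ) : Set ℤ := (↑) '' (S : Set ℕ)

/-- Forces `F` to be the Frobenius number of `S`, see `IsSymmetricAbout.le_of_notMem`. -/
def IsSymmetricAbout (S : AddSubmonoid ℕ) (F : ℤ) : Prop :=
  F ∉ S.toIntSet ∧ ∀ z ∉ S.toIntSet, F - z ∈ S.toIntSet

namespace IsSymmetricAbout

variable {S : AddSubmonoid ℕ} {F : ℤ}

theorem le_of_notMem (h : IsSymmetricAbout S F) {z : ℤ} (hz : z ∉ S.toIntSet) : z ≤ F := by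
  obtain ⟨s, -, hs⟩ := h.2 z hz
  omega

theorem xor (h : IsSymmetricAbout S F) (z : ℤ) :
    Xor (z ∈ S.toIntSet) (F - z ∈ S.toIntSet) := by
  by_cases hz : z ∈ S.toIntSet
  · refine Or.inl ⟨hz, ?_⟩
    rintro ⟨s', hs', hs'z⟩
    obtain ⟨s, hs, rfl⟩ := hz
    exact h.1 ⟨s + s', add_mem hs hs', by push_cast; omega⟩
  · exact Or.inr ⟨h.2 z hz, hz⟩

theorem top : IsSymmetricAbout ⊤ (-1) := by
  refine ⟨fun ⟨s, _, hs⟩ => by omega,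
    fun z hz => ⟨(-1 - z).toNat, AddSubmonoid.mem_top _, ?_⟩⟩
  have : z < 0 := by
    by_contra! h
    exact hz ⟨z.toNat, AddSubmonoid.mem_top _, by omega⟩
  omega

end IsSymmetricAbout

theorem Int.exists_lt_dvd_sub_mul {c : ℤ} {d : ℕ} (hd : 0 < d) (hcop : IsCoprime c d)
    (z : ℤ) :
    ∃ t : ℕ, t < d ∧ (d : ℤ) ∣ z - t * c := by
  obtain ⟨u, v, huv⟩ := hcop
  have hlt : z * u % d < d := Int.emod_lt_of_pos _ (by omega)
  refine ⟨(z * u % d).toNat, by omega, ?_⟩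
  rw [Int.toNat_of_nonneg (Int.emod_nonneg _ (by omega))]
  obtain ⟨m, hm⟩ : (d : ℤ) ∣ z * u - z * u % d := Int.dvd_self_sub_emod
  exact ⟨c * m + z * v, by linear_combination c * hm - z * huv⟩

theorem AddSubmonoid.mem_toIntSet_map_mulLeft_sup_closure_singleton_iff {T : AddSubmonoid ℕ}
    {d c : ℕ} {z : ℤ} :
    z ∈ (T.map (AddMonoidHom.mulLeft d) ⊔ AddSubmonoid.closure {c}).toIntSet ↔
      ∃ u ∈ T, ∃ t : ℕ, (d : ℤ) * u + t * c = z := by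
  simp only [toIntSet, Set.mem_image, SetLike.mem_coe, mem_sup, mem_map, mem_closure_singleton,
    AddMonoidHom.coe_mulLeft, smul_eq_mul]
  constructor
  · rintro ⟨_, ⟨_, ⟨u, hu, rfl⟩, _, ⟨t, rfl⟩, rfl⟩, rfl⟩
    exact ⟨u, hu, t, by push_cast; ring⟩
  · rintro ⟨u, hu, t, rfl⟩
    exact ⟨_, ⟨_, ⟨u, hu, rfl⟩, _, ⟨t, rfl⟩, rfl⟩, by push_cast; ring⟩

theorem IsSymmetricAbout.map_mulLeft_sup_closure_singleton {T : AddSubmonoid ℕ} {F : ℤ}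
    (hT : IsSymmetricAbout T F) {d c : ℕ} (hd : 0 < d) (hcop : Nat.Coprime c d) (hc : c ∈ T) :
    IsSymmetricAbout (T.map (AddMonoidHom.mulLeft d) ⊔ AddSubmonoid.closure {c})
      (d * F + (d - 1) * c) := by
  have hcop' : IsCoprime (c : ℤ) d := Nat.isCoprime_iff_coprime.mpr hcop
  simp only [IsSymmetricAbout, AddSubmonoid.mem_toIntSet_map_mulLeft_sup_closure_singleton_iff]
  constructor
  · rintro ⟨u, hu, t, hF⟩
    obtain ⟨m, hm⟩ : (d : ℤ) ∣ t + 1 :=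
      hcop'.symm.dvd_of_dvd_mul_right ⟨F - u + c, by linear_combination hF⟩
    have hm0 : 0 < m := pos_of_mul_pos_right (a := (d : ℤ)) (by omega) (by positivity)
    obtain ⟨r, hr⟩ : ∃ r : ℕ, (r : ℤ) = m - 1 := ⟨(m - 1).toNat, by omega⟩
    refine hT.1 ⟨u + r * c, add_mem hu (nsmul_mem hc r),
      mul_left_cancel₀ (by omega : (d : ℤ) ≠ 0) ?_⟩
    push_cast
    linear_combination hF - c * hm + d * c * hr
  · intro z hz
    obtain ⟨t, htd, w, hw⟩ := Int.exists_lt_dvd_sub_mul hd hcop' z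
    obtain ⟨v, hv, hvw⟩ :=
      hT.2 w fun ⟨u, hu, huw⟩ => hz ⟨u, hu, t, by linear_combination d * huw - hw⟩
    refine ⟨v, hv, d - 1 - t, ?_⟩
    push_cast [show t ≤ d - 1 by omega, show 1 ≤ d by omega]
    linear_combination d * hvw + hw

theorem Finset.gcd_div_of_forall_dvd {ι : Type*} {s : Finset ι} {f : ι → ℕ} {d : ℕ}
    (hd : ∀ i ∈ s, d ∣ f i) : s.gcd (fun i => f i / d) = s.gcd f / d := by
  rcases Nat.eq_zero_or_pos d with rfl | hd0
  · simp [Finset.gcd_eq_zero_iff]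
  have hf : s.gcd f = s.gcd (fun i => d * (f i / d)) :=
    Finset.gcd_congr rfl fun i hi => (Nat.mul_div_cancel' (hd i hi)).symm
  rw [hf, Finset.gcd_mul_left, normalize_eq, Nat.mul_div_cancel_left _ hd0]

/-- Generators `a 0, …, a (k - 1)`; the gcd over `Finset.range i` is the paper's `d_i`. -/
def IsTelescopic (k : ℕ) (a : ℕ → ℕ) : Prop :=
  ∀ i, 1 ≤ i → i < k →
    a i / Finset.gcd (Finset.range (i + 1)) a ∈
      AddSubmonoid.closure ((fun j => a j / Finset.gcd (Finset.range i) a) '' Set.Iio i)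

namespace IsTelescopic

variable {k n : ℕ} {a : ℕ → ℕ}

theorem mono (h : IsTelescopic k a) (hnk : n ≤ k) : IsTelescopic n a :=
  fun i hi hin => h i hi (hin.trans_le hnk)

theorem div_of_forall_dvd (h : IsTelescopic n a) {d : ℕ} (hd : ∀ j < n, d ∣ a j) :
    IsTelescopic n (fun j => a j / d) := by
  have hgcd : ∀ i ≤ n, (Finset.range i).gcd (fun j => a j / d) = (Finset.range i).gcd a / d :=
    fun i hi => Finset.gcd_div_of_forall_dvd fun j hj => hd j ((Finset.mem_range.mp hj).trans_le hi)
  have hdiv : ∀ i ≤ n, ∀ j,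
      a j / d / ((Finset.range i).gcd a / d) = a j / (Finset.range i).gcd a := fun i hi j => by
    rw [Nat.div_div_eq_div_mul, Nat.mul_div_cancel' (Finset.dvd_gcd fun l hl =>
      hd l ((Finset.mem_range.mp hl).trans_le hi))]
  intro i hi hin
  simp only [hgcd (i + 1) hin, hgcd i hin.le, hdiv (i + 1) hin, hdiv i hin.le]
  exact h i hi hin

end IsTelescopic

theorem closure_image_Iio_add_one_eq (a : ℕ → ℕ) {n d : ℕ} (hd : ∀ j < n, d ∣ a j) :
    AddSubmonoid.closure (a '' Set.Iio (n + 1)) =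
      (AddSubmonoid.closure ((fun j => a j / d) '' Set.Iio n)).map (AddMonoidHom.mulLeft d) ⊔
        AddSubmonoid.closure {a n} := by
  have himage : AddMonoidHom.mulLeft d '' ((fun j => a j / d) '' Set.Iio n) = a '' Set.Iio n := by
    rw [Set.image_image]
    exact Set.image_congr fun j hj => Nat.mul_div_cancel' (hd j hj)
  rw [AddMonoidHom.map_mclosure, himage, ← AddSubmonoid.closure_union, ← Set.image_singleton,
    ← Set.image_union]
  congr 2
  ext j
  simp only [Set.mem_Iio, Set.mem_union, Set.mem_singleton_iff]
  omega

theorem IsTelescopic.exists_isSymmetricAbout {k : ℕ} (hk : 1 ≤ k) {a : ℕ → ℕ}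
    (ha : ∀ i < k, 0 < a i) (hgcd : (Finset.range k).gcd a = 1) (htel : IsTelescopic k a) :
    ∃ F : ℤ, IsSymmetricAbout (AddSubmonoid.closure (a '' Set.Iio k)) F := by
  induction k, hk using Nat.le_induction generalizing a with
  | base =>
    have ha0 : a 0 = 1 := by simpa using hgcd
    rw [show a '' Set.Iio 1 = {1} by simp [ha0], Nat.addSubmonoidClosure_one]
    exact ⟨-1, IsSymmetricAbout.top⟩
  | succ n hn ih =>
    set d := (Finset.range n).gcd a
    have hdvd : ∀ j < n, d ∣ a j := fun j hj => Finset.gcd_dvd (Finset.mem_range.mpr hj)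
    have hd : 0 < d := Nat.pos_of_dvd_of_pos (hdvd 0 hn) (ha 0 (by omega))
    have hcop : Nat.Coprime (a n) d := by
      rwa [Finset.range_add_one, Finset.gcd_insert] at hgcd
    have han : a n ∈ AddSubmonoid.closure ((fun j => a j / d) '' Set.Iio n) := by
      simpa [hgcd] using htel n hn n.lt_add_one
    obtain ⟨F, hF⟩ := ih (a := fun j => a j / d)
      (fun i hi => Nat.div_pos (Nat.le_of_dvd (ha i (by omega)) (hdvd i hi)) hd)
      (by rw [Finset.gcd_div_of_forall_dvd fun j hj => hdvd j (Finset.mem_range.mp hj),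
        Nat.div_self hd])
      ((htel.mono n.le_succ).div_of_forall_dvd hdvd)
    rw [closure_image_Iio_add_one_eq a hdvd]
    exact ⟨_, hF.map_mulLeft_sup_closure_singleton hd hcop han⟩

/-- a telescopic numerical semigroup is symmetric. If `S = ⟨a₁,…,a_k⟩`
(here 0-indexed, generated by `a 0, …, a (k-1)`) is telescopic with
`gcd(a₁,…,a_k) = 1` and Frobenius number `F` (the largest integer not in `S`), then for
every integer `z`, exactly one of `z ∈ S` and `F − z ∈ S` holds. -/
theorem stmt_12 (k : ℕ) (hk : 1 ≤ k) (a : ℕ → ℕ) (ha : ∀ i < k, 0 < a i)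
    (hgcd : Finset.gcd (Finset.range k) a = 1)
    (htel : ∀ i, 1 ≤ i → i < k →
      a i / Finset.gcd (Finset.range (i + 1)) a ∈
        AddSubmonoid.closure ((fun j => a j / Finset.gcd (Finset.range i) a) '' Set.Iio i))
    (F : ℤ)
    (hF : ¬ ∃ s ∈ AddSubmonoid.closure (a '' Set.Iio k), (s : ℤ) = F)
    (hFmax : ∀ z : ℤ, (¬ ∃ s ∈ AddSubmonoid.closure (a '' Set.Iio k), (s : ℤ) = z) → z ≤ F) :
    ∀ z : ℤ,
      Xor' (∃ s ∈ AddSubmonoid.closure (a '' Set.Iio k), (s : ℤ) = z)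
        (∃ s ∈ AddSubmonoid.closure (a '' Set.Iio k), (s : ℤ) = F - z) := by
  obtain ⟨F₀, hF₀⟩ := IsTelescopic.exists_isSymmetricAbout hk ha hgcd htel
  obtain rfl : F = F₀ := le_antisymm (hF₀.le_of_notMem hF) (hFmax F₀ hF₀.1)
  exact hF₀.xor
end

section
/- Let n ≥ 2 and let 0 = r_0 < r_1 < ... < r_t < r_{t+1} = n be integers, with δ_i = r_{t+1−i} − r_{t−i} for 0 ≤ i ≤ t. Define f_0(x) = x^{1+q^{r_1}+...+q^{r_t}} and f_i(x) = f_{i−1}(x)^{q^{δ_{i−1}}} mod (x^{q^n} − x). If δ_0 ≤ δ_1 ≤ ... ≤ δ_t, then the polynomial f(x) = Σ_{e ∈ I} T_{δ_e}(f_e(x)) (where I indexes the distinct f_i and T_k is the trace polynomial) has degree q^{r_1−1} + q^{r_2−1} + ... + q^{r_t−1} + q^{n−1}. -/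
/-!
Every `f_i` is a monomial `X ^ M_i`. The base-`q` digits of `M₀ = ∑ q ^ r_j` are ones whose gaps,
read from the top, are `δ₁, …, δ_t`. Raising to the power `q ^ δ_i` and reducing modulo
`X ^ q ^ n - X` (i.e. reducing the exponent modulo `q ^ n - 1`) rotates the digits cyclically, so
the gaps of `M_i` are `δ_{i+1}, …, δ_t, δ₀, …, δ_{i-1}`. Thus `f` is a sum of the monomials
`X ^ (M_i q ^ j)`, `i ∈ I`, `j < δ_i`, which are pairwise distinct because `q ∤ M_i` and the `M_i`,
`i ∈ I`, are distinct. The top digit of `M_i q ^ (δ_i - 1)` is at `n - 1` and the others lie below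
it by the partial sums of its gaps; as `δ` is increasing, the partial sums of any cyclic window of
`δ` dominate those of `δ₀, δ₁, …`, so the largest exponent is the one for `i = t`, which is
`q ^ (r₁ - 1) + ⋯ + q ^ (r_t - 1) + q ^ (n - 1)`.
-/

/-- The iterated polynomials `f₀ = f0`, `f_{i+1} = f_i^{q^{δ_i}} mod (x^{q^n} − x)`. -/
noncomputable def fseq (q n : ℕ) {F : Type*} [Field F] (f0 : Polynomial F) (δ : ℕ → ℕ) : ℕ → Polynomial F
  | 0 => f0
  | i + 1 => (fseq q n f0 δ i ^ q ^ δ i) %ₘ (Polynomial.X ^ q ^ n - Polynomial.X)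

open Finset Polynomial

-- The base-`q` number with `m + 1` digits equal to one, the gaps between them being
-- `c 0, …, c (m - 1)` from the top down.
def gapNumber (q : ℕ) (c : ℕ → ℕ) : ℕ → ℕ
  | 0 => 1
  | m + 1 => gapNumber q c m * q ^ c m + 1

section gapNumber

theorem gapNumber_eq_sum (q : ℕ) (c : ℕ → ℕ) (m : ℕ) :
    gapNumber q c m = ∑ l ∈ range (m + 1), q ^ ∑ k ∈ Ico l m, c k := by
  induction m with
  | zero => simp [gapNumber]
  | succ m ih =>
    rw [gapNumber, ih, sum_mul, sum_range_succ _ (m + 1), Ico_self, sum_empty, pow_zero]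
    congr 1
    refine sum_congr rfl fun l hl => ?_
    rw [sum_Ico_succ_top (by simpa [Nat.lt_succ_iff] using hl), pow_add]

theorem gapNumber_succ_eq_pow_add (q : ℕ) (c : ℕ → ℕ) (m : ℕ) :
    gapNumber q c (m + 1) = q ^ ∑ k ∈ range (m + 1), c k + gapNumber q (fun k => c (k + 1)) m := by
  induction m with
  | zero => simp [gapNumber]
  | succ m ih =>
    rw [gapNumber, ih, gapNumber, sum_range_succ _ (m + 1), pow_add]
    ring

theorem pow_le_gapNumber (q : ℕ) (c : ℕ → ℕ) (m : ℕ) :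
    q ^ ∑ k ∈ range m, c k ≤ gapNumber q c m := by
  induction m with
  | zero => simp [gapNumber]
  | succ m ih =>
    rw [gapNumber, sum_range_succ, pow_add]
    exact (Nat.mul_le_mul_right _ ih).trans (Nat.le_succ _)

variable {q : ℕ} {c : ℕ → ℕ}

theorem gapNumber_mod (hq : 1 < q) (hc : ∀ k, 0 < c k) (m : ℕ) : gapNumber q c m % q = 1 := by
  cases m with
  | zero => exact Nat.mod_eq_of_lt hq
  | succ m =>
    rw [gapNumber, Nat.add_mod, Nat.mul_mod, Nat.pow_mod, Nat.mod_self, zero_pow (hc m).ne',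
      Nat.zero_mod, mul_zero, Nat.zero_mod, zero_add, Nat.mod_mod, Nat.mod_eq_of_lt hq]

theorem gapNumber_lt_pow (hq : 1 < q) (hc : ∀ k, 0 < c k) (m : ℕ) :
    gapNumber q c m < q ^ (∑ k ∈ range m, c k + 1) := by
  induction m with
  | zero => simpa [gapNumber] using hq
  | succ m ih =>
    have hc1 : 1 < q ^ c m := Nat.one_lt_pow (hc m).ne' hq
    calc gapNumber q c m * q ^ c m + 1
        < (gapNumber q c m + 1) * q ^ c m := by rw [add_mul, one_mul]; omega
      _ ≤ q ^ (∑ k ∈ range m, c k + 1) * q ^ c m := Nat.mul_le_mul_right _ ih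
      _ = q ^ (∑ k ∈ range (m + 1), c k + 1) := by rw [sum_range_succ, ← pow_add]; ring_nf

theorem log_gapNumber (hq : 1 < q) (hc : ∀ k, 0 < c k) (m : ℕ) :
    Nat.log q (gapNumber q c m) = ∑ k ∈ range m, c k :=
  Nat.log_eq_of_pow_le_of_lt_pow (pow_le_gapNumber q c m) (gapNumber_lt_pow hq hc m)

-- Compare digit by digit from the top: both sides have their top digit at the same place, and
-- every lower digit on the left lies at least as far below it as the matching one on the right.
theorem gapNumber_mul_pow_le_gapNumber_mul_pow (hq : 0 < q) {c' : ℕ → ℕ} {m s s' : ℕ}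
    (htotal : s + ∑ k ∈ range m, c k = s' + ∑ k ∈ range m, c' k)
    (hprefix : ∀ l ≤ m, ∑ k ∈ range l, c' k ≤ ∑ k ∈ range l, c k) :
    gapNumber q c m * q ^ s ≤ gapNumber q c' m * q ^ s' := by
  induction m generalizing s s' with
  | zero => simp_all [gapNumber]
  | succ m ih =>
    have hss' : s ≤ s' := by
      have := hprefix (m + 1) le_rfl
      omega
    have hstep := ih (s := c m + s) (s' := c' m + s')
      (by rw [sum_range_succ, sum_range_succ] at htotal; omega)
      (fun l hl => hprefix l (by omega))
    rw [pow_add, pow_add, ← mul_assoc, ← mul_assoc] at hstep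
    simp only [gapNumber, add_mul, one_mul]
    exact add_le_add hstep (Nat.pow_le_pow_right hq hss')

end gapNumber

section Cyclic

variable {M : Type*} [AddCommMonoid M]

theorem sum_range_card_le_sum_of_monotoneOn [PartialOrder M] [IsOrderedAddMonoid M]
    {δ : ℕ → M} {N : ℕ} (hδ : MonotoneOn δ (Set.Iio N)) {s : Finset ℕ} (hs : s ⊆ range N) :
    ∑ k ∈ range #s, δ k ≤ ∑ k ∈ s, δ k := by
  induction N generalizing s with
  | zero => simp_all
  | succ N ih =>
    have hδN : MonotoneOn δ (Set.Iio N) := hδ.mono (Set.Iio_subset_Iio N.le_succ)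
    by_cases hN : N ∈ s
    · have hcard : #s = #(s.erase N) + 1 := (card_erase_add_one hN).symm
      have herase : s.erase N ⊆ range N := fun k hk => by
        have := hs (mem_of_mem_erase hk)
        simp only [mem_range] at this ⊢
        exact lt_of_le_of_ne (Nat.lt_succ_iff.mp this) (ne_of_mem_erase hk)
      have hlast : #(s.erase N) < N + 1 := by
        simpa using (card_le_card herase)
      rw [hcard, sum_range_succ, ← add_sum_erase s δ hN, add_comm]
      exact add_le_add (hδ (by simpa using hlast) (by simp) (Nat.lt_succ_iff.mp hlast))
        (ih hδN herase)
    · exact ih hδN fun k hk => by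
        have := hs hk
        simp only [mem_range] at this ⊢
        exact lt_of_le_of_ne (Nat.lt_succ_iff.mp this) (ne_of_mem_of_not_mem hk hN)

theorem injOn_add_mod (a N : ℕ) : Set.InjOn (fun k => (a + k) % N) (range N) := by
  intro k hk k' hk' h
  have := Nat.ModEq.add_left_cancel' a (h : (a + k) ≡ (a + k') [MOD N])
  rwa [Nat.ModEq, Nat.mod_eq_of_lt (mem_range.mp hk), Nat.mod_eq_of_lt (mem_range.mp hk')] at this

theorem image_range_add_mod_subset (a : ℕ) {l N : ℕ} (hl : 0 < N) :
    (range l).image (fun k => (a + k) % N) ⊆ range N := by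
  intro x hx
  obtain ⟨k, -, rfl⟩ := mem_image.mp hx
  exact mem_range.mpr (Nat.mod_lt _ hl)

theorem sum_range_add_mod (δ : ℕ → M) (a N : ℕ) :
    ∑ k ∈ range N, δ ((a + k) % N) = ∑ k ∈ range N, δ k := by
  rcases N.eq_zero_or_pos with rfl | hN
  · simp
  rw [← sum_image (injOn_add_mod a N)]
  congr 1
  exact eq_of_subset_of_card_le (image_range_add_mod_subset a hN)
    (by rw [card_image_of_injOn (injOn_add_mod a N)])

theorem sum_range_le_sum_range_add_mod [PartialOrder M] [IsOrderedAddMonoid M]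
    {δ : ℕ → M} {N : ℕ} (hδ : MonotoneOn δ (Set.Iio N)) (a : ℕ) {l : ℕ} (hl : l ≤ N) :
    ∑ k ∈ range l, δ k ≤ ∑ k ∈ range l, δ ((a + k) % N) := by
  rcases l.eq_zero_or_pos with rfl | hl0
  · simp
  have hinj : Set.InjOn (fun k => (a + k) % N) (range l) :=
    (injOn_add_mod a N).mono (by simpa using hl)
  rw [← sum_image hinj]
  simpa [card_image_of_injOn hinj] using
    sum_range_card_le_sum_of_monotoneOn hδ (image_range_add_mod_subset a (l := l) (by omega))

end Cyclic

section FirstOccurrence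

variable {α : Type*} (g : ℕ → α)

theorem exists_mem_filter_forall_lt_ne_eq {N i : ℕ} (hi : i < N)
    [DecidablePred fun i => ∀ j < i, g j ≠ g i] :
    ∃ i' ∈ (range N).filter (fun i => ∀ j < i, g j ≠ g i), g i' = g i := by
  classical
  have hex : ∃ k, g k = g i := ⟨i, rfl⟩
  refine ⟨Nat.find hex, mem_filter.mpr ⟨mem_range.mpr ((Nat.find_min' hex rfl).trans_lt hi),
    fun j hj hne => Nat.find_min hex hj (hne.trans (Nat.find_spec hex))⟩, Nat.find_spec hex⟩

theorem injOn_filter_forall_lt_ne (s : Finset ℕ) [DecidablePred fun i => ∀ j < i, g j ≠ g i] :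
    Set.InjOn g (s.filter fun i => ∀ j < i, g j ≠ g i) := by
  intro i hi i' hi' h
  simp only [coe_filter] at hi hi'
  rcases lt_trichotomy i i' with hlt | heq | hgt
  · exact absurd h (hi'.2 i hlt)
  · exact heq
  · exact absurd h.symm (hi.2 i' hgt)

end FirstOccurrence

theorem eq_and_eq_of_mul_pow_eq_mul_pow {q a b j k : ℕ} (hq : 0 < q) (ha : ¬q ∣ a) (hb : ¬q ∣ b)
    (h : a * q ^ j = b * q ^ k) : a = b ∧ j = k := by
  wlog hjk : j ≤ k generalizing a b j k
  · exact (this hb ha h.symm (by omega)).imp Eq.symm Eq.symm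
  obtain ⟨d, rfl⟩ := Nat.exists_eq_add_of_le hjk
  rw [pow_add, ← mul_assoc, mul_comm b, mul_assoc] at h
  have had : a = q ^ d * b := Nat.eq_of_mul_eq_mul_right (pow_pos hq j) (by linarith)
  rcases d.eq_zero_or_pos with rfl | hd
  · simpa using had
  · exact absurd (had ▸ Dvd.dvd.mul_right (dvd_pow_self q hd.ne') b) ha

theorem X_pow_add_sub_one_modByMonic {R : Type*} [CommRing R] [Nontrivial R] {b Q : ℕ}
    (hb : 0 < b) (hbQ : b < Q) : (X ^ (b + (Q - 1)) : R[X]) %ₘ (X ^ Q - X) = X ^ b := by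
  have hX : (X : R[X]).degree < Q := by
    rw [degree_X]; exact_mod_cast (by omega : 1 < Q)
  have hmonic : (X ^ Q - X : R[X]).Monic := monic_X_pow_sub hX
  have hfactor : (X ^ (b + (Q - 1)) - X ^ b : R[X]) = X ^ (b - 1) * (X ^ Q - X) := by
    rw [mul_sub, ← pow_add, ← pow_succ]
    congr 2 <;> omega
  rw [modByMonic_eq_of_dvd_sub hmonic (hfactor ▸ dvd_mul_left _ _),
    (modByMonic_eq_self_iff hmonic).mpr]
  rw [degree_sub_eq_left_of_degree_lt (by rwa [degree_X_pow]), degree_X_pow, degree_X_pow]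
  exact_mod_cast hbQ

theorem natDegree_sum_sum_X_pow_mul_pow {R ι : Type*} [Semiring R] [Nontrivial R] {q : ℕ}
    (hq : 0 < q) {I : Finset ι} {M d : ι → ℕ} (hM : ∀ i ∈ I, ¬q ∣ M i) (hMinj : Set.InjOn M I)
    (hd : ∀ i ∈ I, 0 < d i) :
    (∑ i ∈ I, ∑ j ∈ range (d i), (X : R[X]) ^ (M i * q ^ j)).natDegree =
      I.sup fun i => M i * q ^ (d i - 1) := by
  rw [sum_sigma', natDegree_sum_eq_of_disjoint, sup_sigma]
  · refine sup_congr rfl fun i hi => le_antisymm (Finset.sup_le fun j hj => ?_) ?_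
    · simp only [natDegree_X_pow]
      exact Nat.mul_le_mul_left _ (Nat.pow_le_pow_right hq (by rw [mem_range] at hj; omega))
    · refine le_sup_of_le (b := d i - 1) (by simpa using hd i hi) ?_
      simp
  · rintro ⟨i, j⟩ ⟨hij, -⟩ ⟨i', j'⟩ ⟨hij', -⟩ hne heq
    simp only [mem_sigma, mem_range] at hij hij'
    simp only [Function.comp_apply, natDegree_X_pow] at heq
    obtain ⟨hM', rfl⟩ := eq_and_eq_of_mul_pow_eq_mul_pow hq (hM i hij.1) (hM i' hij'.1) heq
    obtain rfl := hMinj hij.1 hij'.1 hM'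
    exact hne rfl

-- The exponent `M_i` of the monomial `f_i`.
def fseqExp (q t : ℕ) (δ : ℕ → ℕ) (i : ℕ) : ℕ :=
  gapNumber q (fun k => δ ((i + 1 + k) % (t + 1))) t

section fseqExp

variable {q n t : ℕ} {δ : ℕ → ℕ}

theorem add_one_add_mod_add_one {i : ℕ} (hi : i ≤ t) : (i + 1 + t) % (t + 1) = i := by
  rw [show i + 1 + t = i + (t + 1) by ring, Nat.add_mod_right, Nat.mod_eq_of_lt (by omega)]

theorem pos_of_mod_add_one (hδ : ∀ k ≤ t, 0 < δ k) (k : ℕ) : 0 < δ (k % (t + 1)) :=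
  hδ _ (Nat.lt_succ_iff.mp (Nat.mod_lt _ t.succ_pos))

theorem sum_range_add_mod_add_self (hsum : ∑ k ∈ range (t + 1), δ k = n) {i : ℕ} (hi : i ≤ t) :
    ∑ k ∈ range t, δ ((i + 1 + k) % (t + 1)) + δ i = n := by
  rw [← hsum, ← sum_range_add_mod δ (i + 1), sum_range_succ, add_one_add_mod_add_one hi]

theorem fseqExp_mod (hq : 1 < q) (hδ : ∀ k ≤ t, 0 < δ k) (i : ℕ) : fseqExp q t δ i % q = 1 :=
  gapNumber_mod hq (fun _ => pos_of_mod_add_one hδ _) t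

theorem log_fseqExp_add (hq : 1 < q) (hδ : ∀ k ≤ t, 0 < δ k)
    (hsum : ∑ k ∈ range (t + 1), δ k = n) {i : ℕ} (hi : i ≤ t) :
    Nat.log q (fseqExp q t δ i) + δ i = n := by
  rw [fseqExp, log_gapNumber hq (fun _ => pos_of_mod_add_one hδ _),
    sum_range_add_mod_add_self hsum hi]

theorem fseqExp_lt_pow (hq : 1 < q) (hδ : ∀ k ≤ t, 0 < δ k)
    (hsum : ∑ k ∈ range (t + 1), δ k = n) {i : ℕ} (hi : i ≤ t) : fseqExp q t δ i < q ^ n := by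
  have hgap := gapNumber_lt_pow hq (fun k => pos_of_mod_add_one hδ (i + 1 + k)) t
  have := sum_range_add_mod_add_self hsum hi
  have := hδ i hi
  exact hgap.trans_le (Nat.pow_le_pow_right (by omega) (by omega))

theorem fseqExp_mul_pow_add_one (hsum : ∑ k ∈ range (t + 1), δ k = n) {i : ℕ} (hi : i < t) :
    fseqExp q t δ i * q ^ δ i + 1 = q ^ n + fseqExp q t δ (i + 1) := by
  have := gapNumber_succ_eq_pow_add q (fun k => δ ((i + 1 + k) % (t + 1))) t
  rw [gapNumber, add_one_add_mod_add_one hi.le, sum_range_add_mod, hsum] at this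
  rw [fseqExp, fseqExp, this]
  congr 3
  funext k
  congr 2
  ring

theorem fseq_eq_X_pow {F : Type*} [Field F] {f0 : F[X]} (hf0 : f0 = X ^ fseqExp q t δ 0)
    (hq : 1 < q) (hδ : ∀ k ≤ t, 0 < δ k) (hsum : ∑ k ∈ range (t + 1), δ k = n) :
    ∀ i ≤ t, fseq q n f0 δ i = X ^ fseqExp q t δ i := by
  intro i hi
  induction i with
  | zero => exact hf0
  | succ i ih =>
    have hstep := fseqExp_mul_pow_add_one (q := q) hsum (i := i) (by omega)
    have hpos : 0 < fseqExp q t δ (i + 1) :=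
      Nat.pos_of_ne_zero fun h => by simpa [h] using fseqExp_mod hq hδ (i + 1)
    have hQ : 0 < q ^ n := by positivity
    rw [fseq, ih (by omega), ← pow_mul, show fseqExp q t δ i * q ^ δ i =
      fseqExp q t δ (i + 1) + (q ^ n - 1) by omega]
    exact X_pow_add_sub_one_modByMonic hpos (fseqExp_lt_pow hq hδ hsum hi)

theorem fseqExp_mul_pow_le (hq : 0 < q) (hδ : ∀ k ≤ t, 0 < δ k)
    (hsum : ∑ k ∈ range (t + 1), δ k = n) (hmono : MonotoneOn δ (Set.Iio (t + 1)))
    {i : ℕ} (hi : i ≤ t) :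
    fseqExp q t δ i * q ^ (δ i - 1) ≤ fseqExp q t δ t * q ^ (δ t - 1) := by
  refine gapNumber_mul_pow_le_gapNumber_mul_pow hq ?_ fun l hl => ?_
  · have := sum_range_add_mod_add_self hsum hi
    have := sum_range_add_mod_add_self hsum (le_refl t)
    have := hδ i hi
    have := hδ t le_rfl
    omega
  · calc ∑ k ∈ range l, δ ((t + 1 + k) % (t + 1))
        = ∑ k ∈ range l, δ k := sum_congr rfl fun k hk => by
          rw [Nat.add_mod_left, Nat.mod_eq_of_lt (by rw [mem_range] at hk; omega)]
      _ ≤ ∑ k ∈ range l, δ ((i + 1 + k) % (t + 1)) :=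
          sum_range_le_sum_range_add_mod hmono (i + 1) (by omega)

theorem sup_fseqExp_mul_pow_eq (hq : 1 < q) (hδ : ∀ k ≤ t, 0 < δ k)
    (hsum : ∑ k ∈ range (t + 1), δ k = n) (hmono : MonotoneOn δ (Set.Iio (t + 1)))
    {I : Finset ℕ} (hI : ∀ i ∈ I, i ≤ t) {i₀ : ℕ} (hi₀ : i₀ ∈ I)
    (hM : fseqExp q t δ i₀ = fseqExp q t δ t) :
    (I.sup fun i => fseqExp q t δ i * q ^ (δ i - 1)) = fseqExp q t δ t * q ^ (δ t - 1) := by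
  have hδ₀ : δ i₀ = δ t := by
    have := log_fseqExp_add hq hδ hsum (hI i₀ hi₀)
    have := log_fseqExp_add hq hδ hsum (le_refl t)
    rw [hM] at *
    omega
  exact le_antisymm
    (Finset.sup_le fun i hi => fseqExp_mul_pow_le (by omega) hδ hsum hmono (hI i hi))
    (le_sup_of_le hi₀ (by rw [hM, hδ₀]))

end fseqExp

section Gaps

variable {n t : ℕ} {r δ : ℕ → ℕ}

theorem sum_Ico_gaps_add (hrmono : ∀ j ≤ t, r j < r (j + 1))
    (hδ : ∀ i ≤ t, δ i = r (t + 1 - i) - r (t - i)) {a b : ℕ} (hab : a ≤ b) (hb : b ≤ t + 1) :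
    ∑ k ∈ Ico a b, δ k + r (t + 1 - b) = r (t + 1 - a) := by
  induction b, hab using Nat.le_induction with
  | base => simp
  | succ b hab ih =>
    have hgap := hδ b (by omega)
    have hlt := hrmono (t - b) (by omega)
    rw [show t + 1 - b = t - b + 1 by omega] at ih hgap
    rw [sum_Ico_succ_top hab, show t + 1 - (b + 1) = t - b by omega, ← ih (by omega)]
    omega

theorem gaps_pos (hrmono : ∀ j ≤ t, r j < r (j + 1))
    (hδ : ∀ i ≤ t, δ i = r (t + 1 - i) - r (t - i)) {k : ℕ} (hk : k ≤ t) : 0 < δ k := by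
  have := hrmono (t - k) (by omega)
  rw [hδ k hk, show t + 1 - k = t - k + 1 by omega]
  omega

theorem sum_gaps (hr0 : r 0 = 0) (hrt : r (t + 1) = n) (hrmono : ∀ j ≤ t, r j < r (j + 1))
    (hδ : ∀ i ≤ t, δ i = r (t + 1 - i) - r (t - i)) : ∑ k ∈ range (t + 1), δ k = n := by
  simpa [hr0, hrt, ← range_eq_Ico] using sum_Ico_gaps_add hrmono hδ (Nat.zero_le (t + 1)) le_rfl

theorem fseqExp_zero_eq (q : ℕ) (hr0 : r 0 = 0) (hrmono : ∀ j ≤ t, r j < r (j + 1))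
    (hδ : ∀ i ≤ t, δ i = r (t + 1 - i) - r (t - i)) :
    fseqExp q t δ 0 = ∑ j ∈ range (t + 1), q ^ r j := by
  rw [fseqExp, gapNumber_eq_sum, ← sum_range_reflect (fun j => q ^ r j)]
  refine sum_congr rfl fun l hl => ?_
  have hl : l ≤ t := Nat.lt_succ_iff.mp (mem_range.mp hl)
  have htele := sum_Ico_gaps_add hrmono hδ (a := l + 1) (b := t + 1) (by omega) le_rfl
  rw [← sum_Ico_add', Nat.sub_self, hr0, add_zero] at htele
  rw [show t + 1 - 1 - l = t + 1 - (l + 1) by omega, ← htele]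
  refine congrArg _ (sum_congr rfl fun k hk => ?_)
  rw [zero_add, add_comm, Nat.mod_eq_of_lt (by rw [mem_Ico] at hk; omega)]

theorem fseqExp_mul_pow_eq (q : ℕ) (hr0 : r 0 = 0) (hrt : r (t + 1) = n)
    (hrmono : ∀ j ≤ t, r j < r (j + 1)) (hδ : ∀ i ≤ t, δ i = r (t + 1 - i) - r (t - i)) :
    fseqExp q t δ t * q ^ (δ t - 1) = ∑ j ∈ Icc 1 t, q ^ (r j - 1) + q ^ (n - 1) := by
  have hδt : δ t = r 1 := by simpa [hr0] using hδ t le_rfl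
  have hr1 : 0 < r 1 := hr0 ▸ hrmono 0 (Nat.zero_le t)
  rw [← hrt, ← sum_Icc_succ_top (by omega : 1 ≤ t + 1), ← Ico_add_one_right_eq_Icc,
    sum_Ico_eq_sum_range, Nat.add_sub_cancel, ← sum_range_reflect, fseqExp, gapNumber_eq_sum,
    sum_mul]
  refine sum_congr rfl fun l hl => ?_
  have hl : l ≤ t := Nat.lt_succ_iff.mp (mem_range.mp hl)
  have htele := sum_Ico_gaps_add hrmono hδ (a := l) (b := t) hl t.le_succ
  rw [← pow_add, show 1 + (t + 1 - 1 - l) = t + 1 - l by omega]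
  refine congrArg _ ?_
  have hsum : ∑ k ∈ Ico l t, δ ((t + 1 + k) % (t + 1)) = ∑ k ∈ Ico l t, δ k :=
    sum_congr rfl fun k hk => by rw [Nat.add_mod_left, Nat.mod_eq_of_lt (by rw [mem_Ico] at hk; omega)]
  rw [hsum]
  rw [show t + 1 - t = 1 by omega] at htele
  omega

end Gaps

open Classical in
theorem stmt_14_general (p e₀ : ℕ) [Fact p.Prime] (he : 0 < e₀) (q : ℕ) (hq : q = p ^ e₀)
    (n t : ℕ)
    (r : ℕ → ℕ) (hr0 : r 0 = 0) (hrt : r (t + 1) = n)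
    (hrmono : ∀ j ≤ t, r j < r (j + 1))
    (F : Type*) [Field F]
    (δ : ℕ → ℕ) (hδ : ∀ i ≤ t, δ i = r (t + 1 - i) - r (t - i))
    (hδmono : ∀ i j, i ≤ j → j ≤ t → δ i ≤ δ j)
    (f0 : Polynomial F) (hf0 : f0 = Polynomial.X ^ (∑ j ∈ Finset.range (t + 1), q ^ r j))
    (I : Finset ℕ)
    (hI : I = (Finset.range (t + 1)).filter
      (fun i => ∀ j < i, fseq q n f0 δ j ≠ fseq q n f0 δ i))
    (f : Polynomial F)
    (hf : f = ∑ i ∈ I, ∑ j ∈ Finset.range (δ i), (fseq q n f0 δ i) ^ q ^ j) :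
    f.natDegree = (∑ j ∈ Finset.Icc 1 t, q ^ (r j - 1)) + q ^ (n - 1) := by
  have hq1 : 1 < q := hq ▸ Nat.one_lt_pow he.ne' (Fact.out : p.Prime).one_lt
  have hpos : ∀ k ≤ t, 0 < δ k := fun k => gaps_pos hrmono hδ
  have hsum := sum_gaps hr0 hrt hrmono hδ
  have hmono : MonotoneOn δ (Set.Iio (t + 1)) := fun i _ j hj hij =>
    hδmono i j hij (Nat.lt_succ_iff.mp hj)
  have hfseq := fseq_eq_X_pow (hf0.trans (by rw [fseqExp_zero_eq q hr0 hrmono hδ])) hq1 hpos hsum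
  have hIt : ∀ i ∈ I, i ≤ t := fun i hi => by
    rw [hI, mem_filter, mem_range] at hi
    omega
  have hinj : Set.InjOn (fseqExp q t δ) I := fun i hi i' hi' h => by
    refine injOn_filter_forall_lt_ne (fseq q n f0 δ) _ (hI ▸ hi) (hI ▸ hi') ?_
    rw [hfseq i (hIt i hi), hfseq i' (hIt i' hi'), h]
  have hndvd : ∀ i ∈ I, ¬q ∣ fseqExp q t δ i := fun i _ => by
    rw [Nat.dvd_iff_mod_eq_zero, fseqExp_mod hq1 hpos i]
    omega
  obtain ⟨i₀, hi₀, hfseq_i₀⟩ :=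
    exists_mem_filter_forall_lt_ne_eq (fseq q n f0 δ) (N := t + 1) (lt_add_one t)
  rw [← hI] at hi₀
  have hM : fseqExp q t δ i₀ = fseqExp q t δ t := by
    simpa [hfseq i₀ (hIt i₀ hi₀), hfseq t le_rfl] using congrArg natDegree hfseq_i₀
  rw [← fseqExp_mul_pow_eq q hr0 hrt hrmono hδ,
    ← sup_fseqExp_mul_pow_eq hq1 hpos hsum hmono hIt hi₀ hM,
    ← natDegree_sum_sum_X_pow_mul_pow (R := F) (by omega) hndvd hinj fun i hi => hpos i (hIt i hi),
    hf]
  refine congrArg natDegree (sum_congr rfl fun i hi => sum_congr rfl fun j _ => ?_)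
  rw [hfseq i (hIt i hi), ← pow_mul]

open Classical in
/-- with `0 = r₀ < r₁ < ⋯ < r_t < r_{t+1} = n`,
`δᵢ = r_{t+1−i} − r_{t−i}`, `f₀(x) = x^{1+q^{r₁}+⋯+q^{r_t}}`,
`fᵢ = f_{i−1}^{q^{δ_{i−1}}} mod (x^{q^n} − x)`, and `I` the set of minimal indices of
the distinct `fᵢ`, if `δ₀ ≤ δ₁ ≤ ⋯ ≤ δ_t` then
`f = ∑_{e ∈ I} T_{δ_e}(f_e)` has degree `q^{r₁−1} + ⋯ + q^{r_t−1} + q^{n−1}`. -/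
theorem stmt_14 (p e₀ : ℕ) [Fact p.Prime] (he : 0 < e₀) (q : ℕ) (hq : q = p ^ e₀)
    (n t : ℕ) (hn : 2 ≤ n)
    (r : ℕ → ℕ) (hr0 : r 0 = 0) (hrt : r (t + 1) = n)
    (hrmono : ∀ j ≤ t, r j < r (j + 1))
    (F : Type*) [Field F] [CharP F p]
    (δ : ℕ → ℕ) (hδ : ∀ i ≤ t, δ i = r (t + 1 - i) - r (t - i))
    (hδmono : ∀ i j, i ≤ j → j ≤ t → δ i ≤ δ j)
    (f0 : Polynomial F) (hf0 : f0 = Polynomial.X ^ (∑ j ∈ Finset.range (t + 1), q ^ r j))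
    (I : Finset ℕ)
    (hI : I = (Finset.range (t + 1)).filter
      (fun i => ∀ j < i, fseq q n f0 δ j ≠ fseq q n f0 δ i))
    (f : Polynomial F)
    (hf : f = ∑ i ∈ I, ∑ j ∈ Finset.range (δ i), (fseq q n f0 δ i) ^ q ^ j) :
    f.natDegree = (∑ j ∈ Finset.Icc 1 t, q ^ (r j - 1)) + q ^ (n - 1) :=
  stmt_14_general p e₀ he q hq n t r hr0 hrt hrmono F δ hδ hδmono f0 hf0 I hI f hf
end

section
/- Let n ≥ 2, and 0 = r_0 < r_1 < ... < r_t < r_{t+1} = n with δ_i = r_{t+1−i} − r_{t−i}. For 1 ≤ i ≤ t, the degree of f_i(x) := f_{i−1}(x)^{q^{δ_{i−1}}} mod (x^{q^n} − x), with f_0(x) = x^{1+q^{r_1}+...+q^{r_t}}, equals 1 + q^{r_{t−i+2}−r_{t−i+1}} + ... + q^{r_{t+1}−r_{t−i+1}}·(1 + q^{r_1} + ... + q^{r_{t−i}}). -/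
open Polynomial Finset

theorem Nat.pow_modEq_pow_mod {q : ℕ} (hq : 0 < q) (n a : ℕ) :
    q ^ a ≡ q ^ (a % n) [MOD q ^ n - 1] :=
  calc q ^ a = (q ^ n) ^ (a / n) * q ^ (a % n) := by rw [← pow_mul, ← pow_add, Nat.div_add_mod]
    _ ≡ 1 ^ (a / n) * q ^ (a % n) [MOD q ^ n - 1] :=
        ((Nat.modEq_sub (Nat.one_le_pow _ _ hq)).pow _).mul_right _
    _ = q ^ (a % n) := by rw [one_pow, one_mul]

theorem Set.InjOn.add_mod {ι : Type*} {s : Set ι} {e : ι → ℕ} {n : ℕ} (he : ∀ j ∈ s, e j < n)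
    (hinj : Set.InjOn e s) (d : ℕ) : Set.InjOn (fun j => (e j + d) % n) s := by
  intro j hj k hk hjk
  have hmod : e j % n = e k % n := Nat.ModEq.add_right_cancel' d hjk
  rw [Nat.mod_eq_of_lt (he j hj), Nat.mod_eq_of_lt (he k hk)] at hmod
  exact hinj hj hk hmod

namespace Polynomial

variable {R : Type*} [CommRing R]

theorem X_pow_sub_X_dvd_X_pow_sub_X_pow_of_le {N a b : ℕ} (hN : 1 ≤ N) (hb : 1 ≤ b) (hba : b ≤ a)
    (hab : a ≡ b [MOD N - 1]) : (X ^ N - X : R[X]) ∣ X ^ a - X ^ b := by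
  obtain ⟨k, hk⟩ := (Nat.modEq_iff_dvd' hba).mp hab.symm
  have ha : (X ^ a - X ^ b : R[X]) = X ^ (b - 1) * (X * (X ^ ((N - 1) * k) - 1)) := by
    rw [← mul_assoc, ← pow_succ, mul_sub, mul_one, ← pow_add]
    congr 2 <;> omega
  have hX : (X ^ N - X : R[X]) = X * (X ^ (N - 1) - 1) := by
    rw [mul_sub, mul_one, ← pow_succ']
    congr 2
    omega
  rw [ha, hX]
  exact (mul_dvd_mul_left X (pow_one_sub_dvd_pow_mul_sub_one _ _ _)).mul_left _

theorem X_pow_sub_X_dvd_X_pow_sub_X_pow {N a b : ℕ} (hN : 1 ≤ N) (ha : 1 ≤ a) (hb : 1 ≤ b)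
    (hab : a ≡ b [MOD N - 1]) : (X ^ N - X : R[X]) ∣ X ^ a - X ^ b := by
  rcases le_total b a with hba | hab'
  · exact X_pow_sub_X_dvd_X_pow_sub_X_pow_of_le hN hb hba hab
  · exact dvd_sub_comm.mp (X_pow_sub_X_dvd_X_pow_sub_X_pow_of_le hN ha hab' hab.symm)

theorem X_pow_modByMonic_X_pow_sub_X {N a b : ℕ} (hN : 2 ≤ N) (ha : 1 ≤ a) (hb : 1 ≤ b)
    (hbN : b < N) (hab : a ≡ b [MOD N - 1]) : (X ^ a : R[X]) %ₘ (X ^ N - X) = X ^ b := by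
  nontriviality R
  have hX : degree (X : R[X]) < N := by rw [degree_X]; exact_mod_cast (by omega : 1 < N)
  have hmonic : (X ^ N - X : R[X]).Monic := monic_X_pow_sub hX
  rw [modByMonic_eq_of_dvd_sub hmonic (X_pow_sub_X_dvd_X_pow_sub_X_pow (by omega) ha hb hab),
    (modByMonic_eq_self_iff hmonic).mpr]
  rw [degree_X_pow, degree_sub_eq_left_of_degree_lt (by rwa [degree_X_pow]), degree_X_pow]
  exact_mod_cast hbN

theorem X_pow_sum_pow_pow_modByMonic {ι : Type*} {q n : ℕ} (hq : 2 ≤ q) {s : Finset ι}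
    (hs : s.Nonempty) {e : ι → ℕ} (he : ∀ j ∈ s, e j < n) (hinj : Set.InjOn e s) (d : ℕ) :
    (X ^ ∑ j ∈ s, q ^ e j : R[X]) ^ q ^ d %ₘ (X ^ q ^ n - X)
      = X ^ ∑ j ∈ s, q ^ ((e j + d) % n) := by
  obtain ⟨j₀, hj₀⟩ := hs
  have hn : n ≠ 0 := by have := he j₀ hj₀; omega
  have hpos : ∀ f : ι → ℕ, 0 < ∑ j ∈ s, q ^ f j := fun f =>
    sum_pos (fun _ _ => by positivity) ⟨j₀, hj₀⟩
  rw [← pow_mul]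
  refine X_pow_modByMonic_X_pow_sub_X (hq.trans (Nat.le_self_pow hn q))
    (Nat.mul_pos (hpos _) (by positivity)) (hpos _) ?_ ?_
  · rw [← sum_image (f := (q ^ ·)) (hinj.add_mod he d)]
    exact Nat.geomSum_lt hq fun k hk => by
      obtain ⟨j, -, rfl⟩ := mem_image.mp hk
      exact Nat.mod_lt _ (Nat.pos_of_ne_zero hn)
  · rw [sum_mul, Nat.ModEq, sum_nat_mod, sum_nat_mod s _ (fun j => q ^ ((e j + d) % n))]
    congr 1
    refine sum_congr rfl fun j _ => ?_
    rw [← pow_add]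
    exact Nat.pow_modEq_pow_mod (by omega) n _

end Polynomial

theorem fseq_eq_X_pow_s15 {F : Type*} [Field F] {q n : ℕ} (hq : 2 ≤ q) {ι : Type*} {s : Finset ι}
    (hs : s.Nonempty) {e : ι → ℕ} (he : ∀ j ∈ s, e j < n) (hinj : Set.InjOn e s)
    {f0 : F[X]} (hf0 : f0 = X ^ ∑ j ∈ s, q ^ e j) (δ : ℕ → ℕ) (i : ℕ) :
    fseq q n f0 δ i = X ^ ∑ j ∈ s, q ^ ((e j + ∑ k ∈ range i, δ k) % n) := by
  have hn : 0 < n := by obtain ⟨j, hj⟩ := hs; have := he j hj; omega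
  induction i with
  | zero =>
    rw [fseq, hf0]
    refine congrArg _ (sum_congr rfl fun j hj => ?_)
    rw [sum_range_zero, add_zero, Nat.mod_eq_of_lt (he j hj)]
  | succ i ih =>
    rw [fseq, ih, X_pow_sum_pow_pow_modByMonic hq hs (fun j _ => Nat.mod_lt _ hn)
      (hinj.add_mod he _)]
    refine congrArg _ (sum_congr rfl fun j _ => ?_)
    rw [Nat.mod_add_mod, add_assoc, sum_range_succ]

section Gaps

variable {r δ : ℕ → ℕ} {t : ℕ}

theorem sum_range_eq_tsub_of_gaps (hr : StrictMonoOn r (Set.Iic (t + 1)))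
    (hδ : ∀ i ≤ t, δ i = r (t + 1 - i) - r (t - i)) :
    ∀ i ≤ t + 1, ∑ k ∈ range i, δ k = r (t + 1) - r (t + 1 - i) := by
  intro i hi
  induction i with
  | zero => simp
  | succ i ih =>
    have hmem : ∀ {j}, j ≤ t + 1 → j ∈ Set.Iic (t + 1) := Set.mem_Iic.mpr
    have h₁ : r (t - i) ≤ r (t + 1 - i) :=
      hr.monotoneOn (hmem (by omega)) (hmem (by omega)) (by omega)
    have h₂ : r (t + 1 - i) ≤ r (t + 1) := hr.monotoneOn (hmem (by omega)) (hmem le_rfl) (by omega)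
    rw [sum_range_succ, ih (by omega), hδ i (by omega), show t + 1 - (i + 1) = t - i by omega]
    omega

theorem sum_range_pow_rotate (q : ℕ) (hr : StrictMonoOn r (Set.Iic (t + 1))) {m : ℕ}
    (hm : m ≤ t) :
    ∑ j ∈ range (t + 1), q ^ ((r j + (r (t + 1) - r m)) % r (t + 1))
      = 1 + ∑ j ∈ Icc (m + 1) t, q ^ (r j - r m)
        + q ^ (r (t + 1) - r m) * ∑ j ∈ range m, q ^ r j := by
  have hlt : ∀ {a b}, a < b → b ≤ t + 1 → r a < r b := fun hab hb =>
    hr (Set.mem_Iic.mpr (by omega)) (Set.mem_Iic.mpr hb) hab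
  have hmn := hlt (show m < t + 1 by omega) le_rfl
  rw [← sum_range_add_sum_Ico _ (by omega : m ≤ t + 1), sum_eq_sum_Ico_succ_bot (by omega),
    Ico_add_one_right_eq_Icc, mul_sum, add_comm]
  congr 1
  · congr 1
    · rw [Nat.add_sub_cancel' hmn.le, Nat.mod_self, pow_zero]
    · refine sum_congr rfl fun j hj => ?_
      obtain ⟨hmj, hjt⟩ := mem_Icc.mp hj
      have := hlt hmj (by omega)
      have := hlt (show j < t + 1 by omega) le_rfl
      rw [show r j + (r (t + 1) - r m) = r j - r m + r (t + 1) by omega, Nat.add_mod_right,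
        Nat.mod_eq_of_lt (by omega)]
  · refine sum_congr rfl fun j hj => ?_
    have := hlt (mem_range.mp hj) (by omega)
    rw [Nat.mod_eq_of_lt (by omega), ← pow_add, add_comm]

end Gaps

theorem stmt_15_general (p e₀ : ℕ) [Fact p.Prime] (he : 0 < e₀) (q : ℕ) (hq : q = p ^ e₀)
    (n t : ℕ)
    (r : ℕ → ℕ) (hrt : r (t + 1) = n)
    (hrmono : ∀ j ≤ t, r j < r (j + 1))
    (F : Type*) [Field F]
    (δ : ℕ → ℕ) (hδ : ∀ i ≤ t, δ i = r (t + 1 - i) - r (t - i))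
    (f0 : Polynomial F) (hf0 : f0 = Polynomial.X ^ (∑ j ∈ Finset.range (t + 1), q ^ r j)) :
    ∀ i, 1 ≤ i → i ≤ t →
      (fseq q n f0 δ i).natDegree
        = 1 + (∑ j ∈ Finset.Icc (t - i + 2) t, q ^ (r j - r (t - i + 1)))
          + q ^ (n - r (t - i + 1)) * (∑ j ∈ Finset.range (t - i + 1), q ^ r j) := by
  intro i _ hit
  have hq2 : 2 ≤ q := hq ▸ Nat.one_lt_pow he.ne' (Fact.out : p.Prime).one_lt
  have hr : StrictMonoOn r (Set.Iic (t + 1)) :=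
    strictMonoOn_Iic_of_lt_succ fun j hj => by simpa using hrmono j (by omega)
  have hrange : (range (t + 1) : Set ℕ) ⊆ Set.Iic (t + 1) := fun j hj =>
    Set.mem_Iic.mpr (by simp only [coe_range, Set.mem_Iio] at hj; omega)
  have hrn : ∀ j ∈ range (t + 1), r j < n := fun j hj =>
    hrt ▸ hr (hrange hj) (Set.mem_Iic.mpr le_rfl) (mem_range.mp hj)
  subst hrt
  rw [fseq_eq_X_pow_s15 hq2 nonempty_range_add_one hrn (hr.injOn.mono hrange) hf0, natDegree_X_pow,
    sum_range_eq_tsub_of_gaps hr hδ i (by omega), show t + 1 - i = t - i + 1 by omega,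
    sum_range_pow_rotate q hr (by omega)]

/-- with `0 = r₀ < r₁ < ⋯ < r_t < r_{t+1} = n`,
`δᵢ = r_{t+1−i} − r_{t−i}`, `f₀(x) = x^{1+q^{r₁}+⋯+q^{r_t}}`, and
`fᵢ = f_{i−1}^{q^{δ_{i−1}}} mod (x^{q^n} − x)`, for `1 ≤ i ≤ t` one has
`deg fᵢ = 1 + q^{r_{t−i+2}−r_{t−i+1}} + ⋯ + q^{r_{t+1}−r_{t−i+1}}·(1+q^{r₁}+⋯+q^{r_{t−i}})`. -/
theorem stmt_15 (p e₀ : ℕ) [Fact p.Prime] (he : 0 < e₀) (q : ℕ) (hq : q = p ^ e₀)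
    (n t : ℕ) (hn : 2 ≤ n)
    (r : ℕ → ℕ) (hr0 : r 0 = 0) (hrt : r (t + 1) = n)
    (hrmono : ∀ j ≤ t, r j < r (j + 1))
    (F : Type*) [Field F] [CharP F p]
    (δ : ℕ → ℕ) (hδ : ∀ i ≤ t, δ i = r (t + 1 - i) - r (t - i))
    (f0 : Polynomial F) (hf0 : f0 = Polynomial.X ^ (∑ j ∈ Finset.range (t + 1), q ^ r j)) :
    ∀ i, 1 ≤ i → i ≤ t →
      (fseq q n f0 δ i).natDegree
        = 1 + (∑ j ∈ Finset.Icc (t - i + 2) t, q ^ (r j - r (t - i + 1)))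
          + q ^ (n - r (t - i + 1)) * (∑ j ∈ Finset.range (t - i + 1), q ^ r j) :=
  stmt_15_general p e₀ he q hq n t r hrt hrmono F δ hδ f0 hf0
end

section
/- In the function field E = K(x,y) of the curve y^{q^{n−1}} + ... + y^q + y = x^{q^{n−r}+1} + x^{q^r+1} (reduced mod x^{q^n} = x appropriately so that y^{q^n} = y − x^{q^{n−r}+1} − x^{q^r+1} + x^{q^{n−r}+q^n} + x^{q^n+q^r}), the function s = x^{q^{2r−n}−1}·y − x^{1+q^r} + y^{q^r} − x^{q^{2r−n}+q^r} satisfies s^{q^n} = x^{q^{2r}−q^n}·(y − x^{q^r+1} − x^{q^{n−r}+1} + x^{q^n+q^{n−r}}) + (y − x^{q^{n−r}+1})^{q^r}. -/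
/-- in the function field `E = K(x,y)` of the curve
`y^{q^{n−1}} + ⋯ + y^q + y = x^{q^{n−r}+1} + x^{q^r+1}`, using the relation
`y^{q^n} = y − x^{q^{n−r}+1} − x^{q^r+1} + x^{q^{n−r}+q^n} + x^{q^n+q^r}`, the function
`s = x^{q^{2r−n}−1}·y − x^{1+q^r} + y^{q^r} − x^{q^{2r−n}+q^r}` satisfies
`s^{q^n} = x^{q^{2r}−q^n}·(y − x^{q^r+1} − x^{q^{n−r}+1} + x^{q^n+q^{n−r}})
  + (y − x^{q^{n−r}+1})^{q^r}`. -/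
theorem stmt_19 (p e₀ n r : ℕ) [Fact p.Prime] (he : 0 < e₀) (q : ℕ) (hq : q = p ^ e₀)
    (hn : 3 ≤ n) (h1 : n < 2 * r) (h2 : r < n)
    (E : Type*) [Field E] [CharP E p] (x y : E)
    (hrel : y ^ q ^ n
      = y - x ^ (q ^ (n - r) + 1) - x ^ (q ^ r + 1)
        + x ^ (q ^ (n - r) + q ^ n) + x ^ (q ^ n + q ^ r)) :
    (x ^ (q ^ (2 * r - n) - 1) * y - x ^ (1 + q ^ r) + y ^ q ^ r
        - x ^ (q ^ (2 * r - n) + q ^ r)) ^ q ^ n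
      = x ^ (q ^ (2 * r) - q ^ n)
            * (y - x ^ (q ^ r + 1) - x ^ (q ^ (n - r) + 1) + x ^ (q ^ n + q ^ (n - r)))
          + (y - x ^ (q ^ (n - r) + 1)) ^ q ^ r := by
  have hp : p.Prime := Fact.out
  have hq1 : 1 ≤ q := by rw [hq]; exact Nat.one_le_pow _ _ hp.pos
  have hadd : ∀ (m : ℕ) (u v : E), (u + v) ^ q ^ m = u ^ q ^ m + v ^ q ^ m := by
    intro m u v
    rw [hq, ← pow_mul p e₀ m, add_pow_char_pow]
  have hsub : ∀ (m : ℕ) (u v : E), (u - v) ^ q ^ m = u ^ q ^ m - v ^ q ^ m := by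
    intro m u v
    rw [hq, ← pow_mul p e₀ m, sub_pow_char_pow]
  -- exponent facts
  have hdc : q ^ (2 * r - n) * q ^ n = q ^ (2 * r) := by
    rw [← pow_add]; congr 1; omega
  have hcle : q ^ n ≤ q ^ (2 * r) := Nat.pow_le_pow_right hq1 (by omega)
  have hab : q ^ (n - r) * q ^ r = q ^ n := by
    rw [← pow_add]; congr 1; omega
  have hbb : q ^ r * q ^ r = q ^ (2 * r) := by
    rw [← pow_add]; congr 1; omega
  have e1 : (q ^ (2 * r - n) - 1) * q ^ n = q ^ (2 * r) - q ^ n := by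
    rw [Nat.sub_mul, hdc, one_mul]
  have e2 : (1 + q ^ r) * q ^ n = q ^ n + q ^ r * q ^ n := by ring
  have e3 : (q ^ (n - r) + 1) * q ^ r = q ^ n + q ^ r := by
    rw [add_mul, hab, one_mul]
  have e4 : (q ^ r + 1) * q ^ r = (q ^ (2 * r) - q ^ n) + q ^ n + q ^ r := by
    rw [add_mul, hbb, one_mul]; omega
  have e5 : (q ^ (n - r) + q ^ n) * q ^ r = q ^ n + q ^ n * q ^ r := by
    rw [add_mul, hab, mul_comm]
  have e6 : (q ^ n + q ^ r) * q ^ r = q ^ n * q ^ r + ((q ^ (2 * r) - q ^ n) + q ^ n) := by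
    rw [add_mul, hbb]; omega
  have e7 : (q ^ (2 * r - n) + q ^ r) * q ^ n = ((q ^ (2 * r) - q ^ n) + q ^ n) + q ^ r * q ^ n := by
    rw [add_mul, hdc]; omega
  have hyrn : (y ^ q ^ r) ^ q ^ n = (y ^ q ^ n) ^ q ^ r := by
    rw [← pow_mul, ← pow_mul, mul_comm]
  rw [hsub, hadd, hsub, mul_pow, ← pow_mul, ← pow_mul, hyrn, hrel, ← pow_mul,
    hadd, hadd, hsub, hsub, ← pow_mul, ← pow_mul, ← pow_mul, ← pow_mul,
    e1, e2, e3, e4, e5, e6, e7]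
  rw [pow_add, pow_add, pow_add, pow_add, pow_add, pow_add, pow_add, pow_add,
    pow_add, pow_add]
  ring
end
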